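/- arXiv:0805.4707 — 14 statements merged into one kernel-verified Lean document; each statement's English description precedes it below -/
import Mathlib

section
/- Let X be a Banach space, M and N closed subspaces of X, and Y a complemented closed subspace of X containing both M and N. If K is a closed subspace of X with M ⊕ K = X and N ⊕ K = X (algebraic direct sums with K closed), then Y ∩ K is a common complement of M and N in Y, i.e. M ⊕ (Y ∩ K) = Y and N ⊕ (Y ∩ K) = Y. -/
theorem stmt_0 {X : Type*} [NormedAddCommGroup X] [NormedSpace ℝ X] [CompleteSpace X]
    (M N Y K : Submodule ℝ X)
    (hM : IsClosed (M : Set X)) (hN : IsClosed (N : Set X)) (hY : IsClosed (Y : Set X))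
    (hYcompl : ∃ Z : Submodule ℝ X, IsClosed (Z : Set X) ∧ Y ⊓ Z = ⊥ ∧ Y ⊔ Z = ⊤)
    (hMY : M ≤ Y) (hNY : N ≤ Y)
    (hK : IsClosed (K : Set X))
    (h1 : M ⊓ K = ⊥) (h2 : M ⊔ K = ⊤) (h3 : N ⊓ K = ⊥) (h4 : N ⊔ K = ⊤) :
    IsClosed ((Y ⊓ K : Submodule ℝ X) : Set X) ∧
      M ⊓ (Y ⊓ K) = ⊥ ∧ M ⊔ (Y ⊓ K) = Y ∧ N ⊓ (Y ⊓ K) = ⊥ ∧ N ⊔ (Y ⊓ K) = Y := by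
  refine ⟨hY.inter hK, ?_, ?_, ?_, ?_⟩
  · rw [← inf_assoc, inf_comm M Y, inf_assoc, h1, inf_bot_eq]
  · have := sup_inf_assoc_of_le K hMY
    rw [h2, top_inf_eq] at this
    rw [inf_comm Y K, ← this]
  · rw [← inf_assoc, inf_comm N Y, inf_assoc, h3, inf_bot_eq]
  · have := sup_inf_assoc_of_le K hNY
    rw [h4, top_inf_eq] at this
    rw [inf_comm Y K, ← this]
end

section
/- Let X be a Banach space and M, N finite-dimensional subspaces of X. Then M and N have a common complement in X if and only if dim M = dim N. -/
open Module Submodule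

lemma aux_isClosed_sup {X : Type*} [NormedAddCommGroup X] [NormedSpace ℝ X]
    (K₀ W : Submodule ℝ X) [FiniteDimensional ℝ K₀] (hW : IsClosed (W : Set X)) :
    IsClosed ((K₀ ⊔ W : Submodule ℝ X) : Set X) := by
  haveI : IsClosed (W : Set X) := hW
  have hc : Continuous W.mkQ := continuous_quot_mk
  have h1 : (K₀ ⊔ W : Submodule ℝ X) = (K₀.map W.mkQ).comap W.mkQ := by
    rw [Submodule.comap_map_eq, Submodule.ker_mkQ]
  rw [h1]
  haveI : FiniteDimensional ℝ (K₀.map W.mkQ) := Module.Finite.map _ _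
  exact IsClosed.preimage hc (Submodule.closed_of_finiteDimensional (K₀.map W.mkQ))

lemma aux_exists_notMem {X : Type*} [AddCommGroup X] [Module ℝ X]
    (V M N : Submodule ℝ X) (hM : M ≤ V) (hN : N ≤ V) (hMV : M ≠ V) (hNV : N ≠ V) :
    ∃ x ∈ V, x ∉ M ∧ x ∉ N := by
  obtain ⟨b, hbV, hbM⟩ : ∃ b ∈ V, b ∉ M := by
    by_contra h; push_neg at h
    exact hMV (le_antisymm hM (fun x hx => h x hx))
  obtain ⟨a, haV, haN⟩ : ∃ a ∈ V, a ∉ N := by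
    by_contra h; push_neg at h
    exact hNV (le_antisymm hN (fun x hx => h x hx))
  by_cases hbN : b ∉ N
  · exact ⟨b, hbV, hbM, hbN⟩
  push_neg at hbN
  by_cases haM : a ∉ M
  · exact ⟨a, haV, haM, haN⟩
  push_neg at haM
  refine ⟨a + b, V.add_mem haV hbV, ?_, ?_⟩
  · intro h; exact hbM ((M.add_mem_iff_right haM).mp h)
  · intro h; exact haN ((N.add_mem_iff_left hbN).mp h)

lemma aux_ind {X : Type*} [NormedAddCommGroup X] [NormedSpace ℝ X] [CompleteSpace X] :
    ∀ k : ℕ, ∀ M N : Submodule ℝ X, ∀ (_ : FiniteDimensional ℝ M) (_ : FiniteDimensional ℝ N),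
      finrank ℝ M = finrank ℝ N → finrank ℝ ↥(M ⊔ N) ≤ finrank ℝ M + k →
      ∃ K : Submodule ℝ X, IsClosed (K : Set X) ∧
        M ⊓ K = ⊥ ∧ M ⊔ K = ⊤ ∧ N ⊓ K = ⊥ ∧ N ⊔ K = ⊤ := by
  intro k
  induction k with
  | zero =>
    intro M N hMfd hNfd hMN hsup
    haveI := hMfd; haveI := hNfd
    have hM : M = M ⊔ N := Submodule.eq_of_le_of_finrank_le le_sup_left (by simpa using hsup)
    have hN : N = M ⊔ N := Submodule.eq_of_le_of_finrank_le le_sup_right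
      (by rw [← hMN]; simpa using hsup)
    have hNM : N = M := hN.trans hM.symm
    obtain ⟨K, hKc, hK⟩ := (Submodule.ClosedComplemented.of_finiteDimensional M).exists_isClosed_isCompl
    exact ⟨K, hKc, disjoint_iff.mp hK.disjoint, codisjoint_iff.mp hK.codisjoint,
      by rw [hNM]; exact disjoint_iff.mp hK.disjoint,
      by rw [hNM]; exact codisjoint_iff.mp hK.codisjoint⟩
  | succ k ih =>
    intro M N hMfd hNfd hMN hsup
    haveI := hMfd; haveI := hNfd
    by_cases hle : finrank ℝ ↥(M ⊔ N) ≤ finrank ℝ M + k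
    · exact ih M N hMfd hNfd hMN hle
    push_neg at hle
    have hMne : M ≠ M ⊔ N := by
      intro h
      rw [← h] at hle
      omega
    have hNne : N ≠ M ⊔ N := by
      intro h
      rw [← h, ← hMN] at hle
      omega
    obtain ⟨x, hxV, hxM, hxN⟩ := aux_exists_notMem (M ⊔ N) M N le_sup_left le_sup_right hMne hNne
    have hx0 : x ≠ 0 := fun h => hxM (h ▸ M.zero_mem)
    set S : Submodule ℝ X := Submodule.span ℝ {x} with hS
    have hSfin : finrank ℝ S = 1 := finrank_span_singleton hx0
    have hSle : S ≤ M ⊔ N := (Submodule.span_singleton_le_iff_mem x _).mpr hxV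
    have hdM : M ⊓ S = ⊥ :=
      disjoint_iff.mp ((Submodule.disjoint_span_singleton' hx0).mpr hxM)
    have hdN : N ⊓ S = ⊥ :=
      disjoint_iff.mp ((Submodule.disjoint_span_singleton' hx0).mpr hxN)
    have hrM : finrank ℝ ↥(M ⊔ S) = finrank ℝ M + 1 := by
      have := Submodule.finrank_sup_add_finrank_inf_eq M S
      rw [hdM, hSfin, finrank_bot] at this
      omega
    have hrN : finrank ℝ ↥(N ⊔ S) = finrank ℝ N + 1 := by
      have := Submodule.finrank_sup_add_finrank_inf_eq N S
      rw [hdN, hSfin, finrank_bot] at this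
      omega
    have hsup' : (M ⊔ S) ⊔ (N ⊔ S) = M ⊔ N := by
      rw [sup_sup_sup_comm, sup_idem, sup_eq_left.mpr hSle]
    obtain ⟨K, hKc, hMK, hMK', hNK, hNK'⟩ :=
      ih (M ⊔ S) (N ⊔ S) inferInstance inferInstance
        (by rw [hrM, hrN, hMN])
        (by rw [hsup', hrM]; omega)
    refine ⟨S ⊔ K, aux_isClosed_sup S K hKc, ?_⟩
    have key : ∀ P : Submodule ℝ X, x ∉ P → (P ⊔ S) ⊓ K = ⊥ → (P ⊔ S) ⊔ K = ⊤ →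
        P ⊓ (S ⊔ K) = ⊥ ∧ P ⊔ (S ⊔ K) = ⊤ := by
      intro P hxP hPK hPK'
      constructor
      · rw [eq_bot_iff]
        rintro y ⟨hyP, hySK⟩
        obtain ⟨z, hz, u, hu, rfl⟩ := Submodule.mem_sup.mp hySK
        obtain ⟨c, rfl⟩ := Submodule.mem_span_singleton.mp hz
        have hmem : u ∈ (P ⊔ S) ⊓ K := by
          refine ⟨?_, hu⟩
          have h1 : (c • x + u) - c • x ∈ P ⊔ S :=
            Submodule.sub_mem _ (Submodule.mem_sup_left hyP)
              (Submodule.mem_sup_right (Submodule.smul_mem _ c (Submodule.mem_span_singleton_self x)))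
          simpa using h1
        rw [hPK] at hmem
        have hu0 : u = 0 := hmem
        subst hu0
        rw [add_zero] at hyP ⊢
        by_cases hc : c = 0
        · simp [hc]
        · exact absurd (by simpa [hc] using P.smul_mem c⁻¹ hyP : x ∈ P) hxP
      · rw [← sup_assoc, hPK']
    obtain ⟨h1, h2⟩ := key M hxM hMK hMK'
    obtain ⟨h3, h4⟩ := key N hxN hNK hNK'
    exact ⟨h1, h2, h3, h4⟩

theorem stmt_2 {X : Type*} [NormedAddCommGroup X] [NormedSpace ℝ X] [CompleteSpace X]
    (M N : Submodule ℝ X) [FiniteDimensional ℝ M] [FiniteDimensional ℝ N] :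
    (∃ K : Submodule ℝ X, IsClosed (K : Set X) ∧
        M ⊓ K = ⊥ ∧ M ⊔ K = ⊤ ∧ N ⊓ K = ⊥ ∧ N ⊔ K = ⊤) ↔
      Module.finrank ℝ M = Module.finrank ℝ N := by
  constructor
  · rintro ⟨K, _, hMK, hMK', hNK, hNK'⟩
    have hM : IsCompl M K := ⟨disjoint_iff.mpr hMK, codisjoint_iff.mpr hMK'⟩
    have hN : IsCompl N K := ⟨disjoint_iff.mpr hNK, codisjoint_iff.mpr hNK'⟩
    calc finrank ℝ M = finrank ℝ (X ⧸ K) := (Submodule.quotientEquivOfIsCompl K M hM.symm).finrank_eq.symm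
      _ = finrank ℝ N := (Submodule.quotientEquivOfIsCompl K N hN.symm).finrank_eq
  · intro h
    exact aux_ind (finrank ℝ ↥(M ⊔ N)) M N inferInstance inferInstance h (by omega)
end

section
/- Let X be a Banach space, M and N closed subspaces of X, L a closed subspace contained in both M and N that is complemented in X, and P : X → X a bounded linear projection with range L. If K is a common complement of M and N in X, then L ⊕ K is a common complement of (I−P)(M) and (I−P)(N) in X. -/
/-!
Write `Q = 1 - P`. For a closed complement `K` of `M`, the projection onto `M` along `K` is
continuous, and `L ⊔ K` is the preimage of `L` under it, hence closed. Algebraically, if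
`L ≤ W` and `W ⊕ K = X`, then `Q(W) ⊆ W` and `W ⊆ Q(W) + L`, which gives
`Q(W) + (L + K) = X`; and by the modular law `Q(W) ∩ (L + K) ⊆ W ∩ (L + K) = L`,
while `Q(W) ∩ L ⊆ ker P ∩ range P = 0`.
-/

open LinearMap

namespace Submodule

variable {R E : Type*} [Ring R] [AddCommGroup E] [Module R E]

theorem sup_eq_comap_projection {p q r : Submodule R E} (h : IsCompl p q) (hrp : r ≤ p) :
    r ⊔ q = r.comap (p.projection q h) := by
  ext x
  constructor
  · intro hx
    obtain ⟨a, ha, b, hb, rfl⟩ := mem_sup.1 hx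
    simpa [projection_apply_of_mem_left h (hrp ha), (projection_apply_eq_zero_iff h).2 hb]
      using ha
  · intro hx
    have := add_mem (mem_sup_left (T := q) (mem_comap.1 hx))
      (mem_sup_right (sub_projection_mem h x))
    rwa [add_sub_cancel] at this

theorem IsTopCompl.isClosed_sup [TopologicalSpace E] {p q r : Submodule R E}
    (h : IsTopCompl p q) (hrp : r ≤ p) (hr : IsClosed (r : Set E)) :
    IsClosed ((r ⊔ q : Submodule R E) : Set E) := by
  rw [sup_eq_comap_projection h.isCompl hrp]
  exact hr.preimage h.continuous_projection

end Submodule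

theorem IsIdempotentElem.isCompl_map_id_sub_range_sup {R E : Type*} [Ring R] [AddCommGroup E]
    [Module R E] {P : E →ₗ[R] E} (hP : IsIdempotentElem P) {W K : Submodule R E}
    (hPW : range P ≤ W) (hWK : IsCompl W K) :
    IsCompl (W.map (LinearMap.id - P)) (range P ⊔ K) := by
  have hQW : W.map (LinearMap.id - P) ≤ W := by
    rintro _ ⟨w, hw, rfl⟩
    exact W.sub_mem hw (hPW (mem_range_self P w))
  have hWQ : W ≤ W.map (LinearMap.id - P) ⊔ range P := fun w hw ↦
    Submodule.mem_sup.2 ⟨w - P w, ⟨w, hw, rfl⟩, P w, mem_range_self P w, sub_add_cancel _ _⟩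
  have hmodular : (range P ⊔ K) ⊓ W = range P := by
    rw [sup_inf_assoc_of_le K hPW, inf_comm, hWK.inf_eq_bot, sup_bot_eq]
  constructor
  · rw [disjoint_iff_inf_le]
    calc W.map (LinearMap.id - P) ⊓ (range P ⊔ K)
        ≤ range (LinearMap.id - P) ⊓ range P :=
          le_inf (inf_le_left.trans map_le_range)
            ((le_inf inf_le_right (inf_le_left.trans hQW)).trans hmodular.le)
      _ = ⊥ := by rw [← hP.ker_eq_range, inf_comm, hP.isCompl.inf_eq_bot]
  · rw [codisjoint_iff_le_sup]
    calc ⊤ = W ⊔ K := hWK.sup_eq_top.symm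
      _ ≤ W.map (LinearMap.id - P) ⊔ range P ⊔ K := sup_le_sup_right hWQ K
      _ = W.map (LinearMap.id - P) ⊔ (range P ⊔ K) := sup_assoc _ _ _

theorem stmt_3_general {X : Type*} [NormedAddCommGroup X] [NormedSpace ℝ X] [CompleteSpace X]
    (M N L K : Submodule ℝ X)
    (hM : IsClosed (M : Set X)) (hL : IsClosed (L : Set X))
    (hLM : L ≤ M) (hLN : L ≤ N)
    (P : X →L[ℝ] X) (hP : P ∘L P = P) (hPL : LinearMap.range (P : X →ₗ[ℝ] X) = L)
    (hK : IsClosed (K : Set X))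
    (h1 : M ⊓ K = ⊥) (h2 : M ⊔ K = ⊤) (h3 : N ⊓ K = ⊥) (h4 : N ⊔ K = ⊤) :
    IsClosed ((L ⊔ K : Submodule ℝ X) : Set X) ∧
      Submodule.map ((ContinuousLinearMap.id ℝ X - P : X →L[ℝ] X) : X →ₗ[ℝ] X) M ⊓ (L ⊔ K) = ⊥ ∧
      Submodule.map ((ContinuousLinearMap.id ℝ X - P : X →L[ℝ] X) : X →ₗ[ℝ] X) M ⊔ (L ⊔ K) = ⊤ ∧
      Submodule.map ((ContinuousLinearMap.id ℝ X - P : X →L[ℝ] X) : X →ₗ[ℝ] X) N ⊓ (L ⊔ K) = ⊥ ∧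
      Submodule.map ((ContinuousLinearMap.id ℝ X - P : X →L[ℝ] X) : X →ₗ[ℝ] X) N ⊔ (L ⊔ K) = ⊤ := by
  subst hPL
  have hPidem : IsIdempotentElem (P : X →ₗ[ℝ] X) :=
    ContinuousLinearMap.isIdempotentElem_toLinearMap_iff.2 hP
  have hMK : IsCompl M K := .of_eq h1 h2
  have hNK : IsCompl N K := .of_eq h3 h4
  obtain ⟨hMd, hMc⟩ := hPidem.isCompl_map_id_sub_range_sup hLM hMK
  obtain ⟨hNd, hNc⟩ := hPidem.isCompl_map_id_sub_range_sup hLN hNK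
  exact ⟨(Submodule.IsCompl.isTopCompl_of_isClosed hMK hM hK).isClosed_sup hLM hL,
    hMd.eq_bot, hMc.eq_top, hNd.eq_bot, hNc.eq_top⟩

theorem stmt_3 {X : Type*} [NormedAddCommGroup X] [NormedSpace ℝ X] [CompleteSpace X]
    (M N L K : Submodule ℝ X)
    (hM : IsClosed (M : Set X)) (hN : IsClosed (N : Set X)) (hL : IsClosed (L : Set X))
    (hLM : L ≤ M) (hLN : L ≤ N)
    (P : X →L[ℝ] X) (hP : P ∘L P = P) (hPL : LinearMap.range (P : X →ₗ[ℝ] X) = L)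
    (hK : IsClosed (K : Set X))
    (h1 : M ⊓ K = ⊥) (h2 : M ⊔ K = ⊤) (h3 : N ⊓ K = ⊥) (h4 : N ⊔ K = ⊤) :
    IsClosed ((L ⊔ K : Submodule ℝ X) : Set X) ∧
      Submodule.map ((ContinuousLinearMap.id ℝ X - P : X →L[ℝ] X) : X →ₗ[ℝ] X) M ⊓ (L ⊔ K) = ⊥ ∧
      Submodule.map ((ContinuousLinearMap.id ℝ X - P : X →L[ℝ] X) : X →ₗ[ℝ] X) M ⊔ (L ⊔ K) = ⊤ ∧
      Submodule.map ((ContinuousLinearMap.id ℝ X - P : X →L[ℝ] X) : X →ₗ[ℝ] X) N ⊓ (L ⊔ K) = ⊥ ∧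
      Submodule.map ((ContinuousLinearMap.id ℝ X - P : X →L[ℝ] X) : X →ₗ[ℝ] X) N ⊔ (L ⊔ K) = ⊤ :=
  stmt_3_general M N L K hM hL hLM hLN P hP hPL hK h1 h2 h3 h4
end

section
/- Let X be a Banach space and M, N closed subspaces of X. If M and N have a common complement in X, then the annihilators M^⊥ and N^⊥ have a common complement in the dual space X*. -/
/-!
If `K` is a closed common complement of `M` and `N`, then `K^⊥` is a common complement of `M^⊥`
and `N^⊥`. For closed complementary subspaces `p`, `q`, the projection `π` onto `p` along `q` is
continuous (closed graph theorem), and every functional splits as `(f - f ∘ π) + f ∘ π` with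
`f - f ∘ π ∈ p^⊥` and `f ∘ π ∈ q^⊥`; `p^⊥ ∩ q^⊥ = 0` because `p + q = X`.
-/

/-- The annihilator of a subspace `M` of `X` in the continuous dual of `X`. -/
noncomputable def contAnnihilator {X : Type*} [NormedAddCommGroup X] [NormedSpace ℝ X]
    (M : Submodule ℝ X) : Submodule ℝ (X →L[ℝ] ℝ) where
  carrier := {f | ∀ x ∈ M, f x = 0}
  add_mem' := by intro f g hf hg x hx; simp [hf x hx, hg x hx]
  zero_mem' := by intro x hx; simp
  smul_mem' := by intro c f hf x hx; simp [hf x hx]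

section

variable {X : Type*} [NormedAddCommGroup X] [NormedSpace ℝ X]

lemma isClosed_contAnnihilator (M : Submodule ℝ X) :
    IsClosed (contAnnihilator M : Set (X →L[ℝ] ℝ)) := by
  have : (contAnnihilator M : Set (X →L[ℝ] ℝ)) = ⋂ x ∈ M, {f | f x = 0} := by
    ext f; simp [contAnnihilator]
  rw [this]
  exact isClosed_biInter fun x _ => isClosed_eq (continuous_eval_const x) continuous_const

lemma disjoint_contAnnihilator_of_codisjoint {p q : Submodule ℝ X} (h : Codisjoint p q) :
    Disjoint (contAnnihilator p) (contAnnihilator q) := by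
  rw [disjoint_iff, eq_bot_iff]
  rintro f ⟨hfp, hfq⟩
  ext x
  have hx : x ∈ p ⊔ q := codisjoint_iff.mp h ▸ Submodule.mem_top
  obtain ⟨a, ha, b, hb, rfl⟩ := Submodule.mem_sup.mp hx
  simp [hfp a ha, hfq b hb]

lemma codisjoint_contAnnihilator_of_isTopCompl {p q : Submodule ℝ X} (h : p.IsTopCompl q) :
    Codisjoint (contAnnihilator p) (contAnnihilator q) := by
  rw [codisjoint_iff, eq_top_iff]
  intro f _
  let π := p.projectionL q h
  refine Submodule.mem_sup.mpr ⟨f - f ∘L π, fun x hx => ?_, f ∘L π, fun x hx => ?_, by abel⟩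
  · simp [π, Submodule.projectionL_apply_left h ⟨x, hx⟩]
  · simp [π, Submodule.projectionL_apply_right h ⟨x, hx⟩]

lemma isCompl_contAnnihilator_of_isTopCompl {p q : Submodule ℝ X} (h : p.IsTopCompl q) :
    IsCompl (contAnnihilator p) (contAnnihilator q) :=
  ⟨disjoint_contAnnihilator_of_codisjoint h.isCompl.codisjoint,
    codisjoint_contAnnihilator_of_isTopCompl h⟩

end

theorem stmt_6 {X : Type*} [NormedAddCommGroup X] [NormedSpace ℝ X] [CompleteSpace X]
    (M N : Submodule ℝ X) (hM : IsClosed (M : Set X)) (hN : IsClosed (N : Set X))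
    (h : ∃ K : Submodule ℝ X, IsClosed (K : Set X) ∧
        M ⊓ K = ⊥ ∧ M ⊔ K = ⊤ ∧ N ⊓ K = ⊥ ∧ N ⊔ K = ⊤) :
    ∃ K : Submodule ℝ (X →L[ℝ] ℝ), IsClosed (K : Set (X →L[ℝ] ℝ)) ∧
      contAnnihilator M ⊓ K = ⊥ ∧ contAnnihilator M ⊔ K = ⊤ ∧
      contAnnihilator N ⊓ K = ⊥ ∧ contAnnihilator N ⊔ K = ⊤ := by
  obtain ⟨K, hK, hMK, hMK', hNK, hNK'⟩ := h
  have hM' := isCompl_contAnnihilator_of_isTopCompl <|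
    Submodule.isTopCompl_iff_isCompl_isClosed.mpr
      ⟨⟨disjoint_iff.mpr hMK, codisjoint_iff.mpr hMK'⟩, hM, hK⟩
  have hN' := isCompl_contAnnihilator_of_isTopCompl <|
    Submodule.isTopCompl_iff_isCompl_isClosed.mpr
      ⟨⟨disjoint_iff.mpr hNK, codisjoint_iff.mpr hNK'⟩, hN, hK⟩
  exact ⟨contAnnihilator K, isClosed_contAnnihilator K,
    hM'.inf_eq_bot, hM'.sup_eq_top, hN'.inf_eq_bot, hN'.sup_eq_top⟩
end

section
/- Let X be a Banach space and M, N closed subspaces of X. If there exists a bounded linear projection P : X → X with range N such that the restriction of P to M is an isomorphism (bounded bijection with bounded inverse) from M onto N, then M and N have a common complement in X, namely ker P. -/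
/-!
`ker P` is closed because `P` is bounded, and it complements the range `N` because `P` is
idempotent. It also complements `M` because `P` maps `M` bijectively onto `N = range P`:
injectivity gives `M ∩ ker P = 0`, and for any `x`, the `m ∈ M` with `P m = P x` splits
`x = m + (x - m)` with `x - m ∈ ker P`.
-/

namespace LinearMap

variable {R E F : Type*} [Ring R] [AddCommGroup E] [Module R E] [AddCommGroup F] [Module R F]

theorem isCompl_ker_of_linearEquiv {f : E →ₗ[R] F} {p : Submodule R E} {q : Submodule R F}
    (e : p ≃ₗ[R] q) (he : ∀ x : p, (e x : F) = f x) (hq : range f ≤ q) :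
    IsCompl p (ker f) := by
  have hmap : p.map f = range f := by
    refine le_antisymm map_le_range fun y hy => ?_
    obtain ⟨x, hx⟩ := e.surjective ⟨y, hq hy⟩
    exact ⟨x, x.2, by rw [← he, hx]⟩
  constructor
  · refine disjoint_ker_iff_injOn.mpr fun x hx y hy hxy => ?_
    have : e ⟨x, hx⟩ = e ⟨y, hy⟩ := Subtype.ext (by rw [he, he]; exact hxy)
    exact congrArg Subtype.val (e.injective this)
  · rw [codisjoint_iff, ← Submodule.comap_map_eq, hmap]
    exact Submodule.eq_top_iff'.mpr fun x => mem_range_self f x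

end LinearMap

theorem stmt_7_general {X : Type*} [NormedAddCommGroup X] [NormedSpace ℝ X]
    (M N : Submodule ℝ X) (P : X →L[ℝ] X) (hP : P ∘L P = P) (hPN : LinearMap.range (P : X →ₗ[ℝ] X) = N)
    (e : M ≃L[ℝ] N) (he : ∀ x : M, (e x : X) = P x) :
    IsClosed ((LinearMap.ker (P : X →ₗ[ℝ] X) : Submodule ℝ X) : Set X) ∧
      M ⊓ LinearMap.ker (P : X →ₗ[ℝ] X) = ⊥ ∧ M ⊔ LinearMap.ker (P : X →ₗ[ℝ] X) = ⊤ ∧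
      N ⊓ LinearMap.ker (P : X →ₗ[ℝ] X) = ⊥ ∧ N ⊔ LinearMap.ker (P : X →ₗ[ℝ] X) = ⊤ := by
  have hM := LinearMap.isCompl_ker_of_linearEquiv e.toLinearEquiv he hPN.le
  have hN : IsCompl N (LinearMap.ker (P : X →ₗ[ℝ] X)) :=
    hPN ▸ LinearMap.IsIdempotentElem.isCompl (ContinuousLinearMap.IsIdempotentElem.toLinearMap hP)
  exact ⟨P.isClosed_ker, hM.inf_eq_bot, hM.sup_eq_top, hN.inf_eq_bot, hN.sup_eq_top⟩

theorem stmt_7 {X : Type*} [NormedAddCommGroup X] [NormedSpace ℝ X] [CompleteSpace X]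
    (M N : Submodule ℝ X) (hM : IsClosed (M : Set X)) (hN : IsClosed (N : Set X))
    (P : X →L[ℝ] X) (hP : P ∘L P = P) (hPN : LinearMap.range (P : X →ₗ[ℝ] X) = N)
    (e : M ≃L[ℝ] N) (he : ∀ x : M, (e x : X) = P x) :
    IsClosed ((LinearMap.ker (P : X →ₗ[ℝ] X) : Submodule ℝ X) : Set X) ∧
      M ⊓ LinearMap.ker (P : X →ₗ[ℝ] X) = ⊥ ∧ M ⊔ LinearMap.ker (P : X →ₗ[ℝ] X) = ⊤ ∧
      N ⊓ LinearMap.ker (P : X →ₗ[ℝ] X) = ⊥ ∧ N ⊔ LinearMap.ker (P : X →ₗ[ℝ] X) = ⊤ :=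
  stmt_7_general M N P hP hPN e he
end

section
/- Let X be a Banach space and M, N closed subspaces of X. If M and N have a common complement in the closure of M + N, then there exist an isomorphism U from M onto N with U restricted to M ∩ N equal to the identity, and a constant C ≥ 1 such that ‖Ux + y‖ ≤ C‖x + y‖ for all x ∈ M and y ∈ N. -/
/-! Inside the Banach space `Y = closure (M + N)`, both `M` and `N` are closed complements of `K`,
so each is continuously isomorphic to `Y ⧸ K`. The composite isomorphism `U : M ≃ N` is the
restriction to `M` of the projection `Q` of `Y` onto `N` along `K`. Hence `U` fixes `M ∩ N`, and
`U x + y = Q (x + y)` for `y ∈ N` gives the bound with `C = max ‖Q‖ 1`. -/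

namespace Submodule

section CommonComplement

variable {R E : Type*} [Ring R] [AddCommGroup E] [Module R E] [TopologicalSpace E]
  [IsTopologicalAddGroup E] {M N K : Submodule R E}

noncomputable def equivOfCommonTopCompl (hM : IsTopCompl K M) (hN : IsTopCompl K N) :
    M ≃L[R] N :=
  (quotientEquivOfIsTopCompl K M hM).symm.trans (quotientEquivOfIsTopCompl K N hN)

theorem coe_equivOfCommonTopCompl_apply (hM : IsTopCompl K M) (hN : IsTopCompl K N) (x : M) :
    (equivOfCommonTopCompl hM hN x : E) = N.projectionL K hN.symm x :=
  rfl

theorem equivOfCommonTopCompl_apply_of_mem (hM : IsTopCompl K M) (hN : IsTopCompl K N) {x : M}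
    (hx : (x : E) ∈ N) : (equivOfCommonTopCompl hM hN x : E) = x := by
  rw [coe_equivOfCommonTopCompl_apply, projectionL_eq_self_iff]
  exact hx

theorem equivOfCommonTopCompl_apply_add (hM : IsTopCompl K M) (hN : IsTopCompl K N) (x : M)
    (y : N) : (equivOfCommonTopCompl hM hN x : E) + y = N.projectionL K hN.symm (x + y) := by
  rw [map_add, projectionL_apply_left, coe_equivOfCommonTopCompl_apply]

end CommonComplement

theorem norm_equivOfCommonTopCompl_apply_add_le {𝕜 E : Type*} [NontriviallyNormedField 𝕜]
    [SeminormedAddCommGroup E] [NormedSpace 𝕜 E] {M N K : Submodule 𝕜 E}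
    (hM : IsTopCompl K M) (hN : IsTopCompl K N) (x : M) (y : N) :
    ‖(equivOfCommonTopCompl hM hN x : E) + y‖ ≤
      ‖N.projectionL K hN.symm‖ * ‖(x : E) + y‖ := by
  rw [equivOfCommonTopCompl_apply_add]
  exact (N.projectionL K hN.symm).le_opNorm _

theorem isCompl_comap_subtype_of_inf_eq_bot_of_sup_eq {R E : Type*} [Ring R] [AddCommGroup E]
    [Module R E] {p q r : Submodule R E} (h_inf : q ⊓ r = ⊥) (h_sup : q ⊔ r = p) :
    IsCompl (q.comap p.subtype) (r.comap p.subtype) := by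
  subst h_sup
  rw [(q ⊔ r).mapIic.isCompl_iff, Set.Iic.isCompl_iff]
  simp [disjoint_iff, h_inf]

theorem isTopCompl_comap_subtype_of_inf_eq_bot_of_sup_eq {𝕜 E : Type*}
    [NontriviallyNormedField 𝕜] [NormedAddCommGroup E] [NormedSpace 𝕜 E]
    {p q r : Submodule 𝕜 E} [CompleteSpace p] (hq : IsClosed (q : Set E))
    (hr : IsClosed (r : Set E)) (h_inf : q ⊓ r = ⊥) (h_sup : q ⊔ r = p) :
    IsTopCompl (q.comap p.subtype) (r.comap p.subtype) :=
  IsCompl.isTopCompl_of_isClosed (isCompl_comap_subtype_of_inf_eq_bot_of_sup_eq h_inf h_sup)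
    (hq.preimage continuous_subtype_val) (hr.preimage continuous_subtype_val)

noncomputable def comapSubtypeLinearIsometryEquivOfLe {R E : Type*} [Ring R]
    [SeminormedAddCommGroup E] [Module R E] {p q : Submodule R E} (hpq : p ≤ q) :
    comap q.subtype p ≃ₗᵢ[R] p :=
  { comapSubtypeEquivOfLe hpq with norm_map' := fun _ => rfl }

end Submodule

theorem stmt_9_general {X : Type*} [NormedAddCommGroup X] [NormedSpace ℝ X] [CompleteSpace X]
    (M N : Submodule ℝ X) (hM : IsClosed (M : Set X)) (hN : IsClosed (N : Set X))
    (K : Submodule ℝ X) (hK : IsClosed (K : Set X))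
    (h1 : M ⊓ K = ⊥) (h2 : M ⊔ K = (M ⊔ N).topologicalClosure)
    (h3 : N ⊓ K = ⊥) (h4 : N ⊔ K = (M ⊔ N).topologicalClosure) :
    ∃ (U : M ≃L[ℝ] N) (C : ℝ), 1 ≤ C ∧
      (∀ x : M, (x : X) ∈ N → (U x : X) = (x : X)) ∧
      ∀ (x : M) (y : N), ‖(U x : X) + (y : X)‖ ≤ C * ‖(x : X) + (y : X)‖ := by
  set Y := (M ⊔ N).topologicalClosure
  have : CompleteSpace Y := (M ⊔ N).isClosed_topologicalClosure.completeSpace_coe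
  have hKM : Submodule.IsTopCompl (K.comap Y.subtype) (M.comap Y.subtype) :=
    Submodule.isTopCompl_comap_subtype_of_inf_eq_bot_of_sup_eq hK hM
      (by rwa [inf_comm]) (by rwa [sup_comm])
  have hKN : Submodule.IsTopCompl (K.comap Y.subtype) (N.comap Y.subtype) :=
    Submodule.isTopCompl_comap_subtype_of_inf_eq_bot_of_sup_eq hK hN
      (by rwa [inf_comm]) (by rwa [sup_comm])
  let eM := Submodule.comapSubtypeLinearIsometryEquivOfLe (h2 ▸ le_sup_left : M ≤ Y)
  let eN := Submodule.comapSubtypeLinearIsometryEquivOfLe (h4 ▸ le_sup_left : N ≤ Y)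
  let U := Submodule.equivOfCommonTopCompl hKM hKN
  refine ⟨eM.toContinuousLinearEquiv.symm.trans (U.trans eN.toContinuousLinearEquiv),
    max ‖(N.comap Y.subtype).projectionL _ hKN.symm‖ 1, le_max_right _ _,
    fun x hx => ?_, fun x y => ?_⟩
  · exact congrArg Subtype.val
      (Submodule.equivOfCommonTopCompl_apply_of_mem hKM hKN (x := eM.symm x) hx)
  · calc _ ≤ _ :=
          Submodule.norm_equivOfCommonTopCompl_apply_add_le hKM hKN (eM.symm x) (eN.symm y)
      _ ≤ _ := mul_le_mul_of_nonneg_right (le_max_left _ _) (norm_nonneg _)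

theorem stmt_9 {X : Type*} [NormedAddCommGroup X] [NormedSpace ℝ X] [CompleteSpace X]
    (M N : Submodule ℝ X) (hM : IsClosed (M : Set X)) (hN : IsClosed (N : Set X))
    (K : Submodule ℝ X) (hK : IsClosed (K : Set X))
    (hKY : K ≤ (M ⊔ N).topologicalClosure)
    (h1 : M ⊓ K = ⊥) (h2 : M ⊔ K = (M ⊔ N).topologicalClosure)
    (h3 : N ⊓ K = ⊥) (h4 : N ⊔ K = (M ⊔ N).topologicalClosure) :
    ∃ (U : M ≃L[ℝ] N) (C : ℝ), 1 ≤ C ∧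
      (∀ x : M, (x : X) ∈ N → (U x : X) = (x : X)) ∧
      ∀ (x : M) (y : N), ‖(U x : X) + (y : X)‖ ≤ C * ‖(x : X) + (y : X)‖ :=
  stmt_9_general M N hM hN K hK h1 h2 h3 h4
end

section
/- Let X be a Banach space and M, N closed subspaces of X. Suppose there exist an isomorphism U from M onto N with U restricted to M ∩ N equal to the identity, and a constant C ≥ 1 such that ‖Ux + y‖ ≤ C‖x + y‖ for all x ∈ M, y ∈ N. Then M and N have a common complement in the closure of M + N. -/
/-!
The bound `‖U x + y‖ ≤ C ‖x + y‖` says that `x + y ↦ U x + y` is a well-defined bounded operator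
on `M + N`, so it extends to a bounded `Q` from `Y = closure (M + N)` into the closed subspace `N`.
Now `Q` restricts to the isomorphism `U` on `M` and to the identity on `N`, and a subspace
`A ⊆ Y` on which `Q` is a bijection onto `N` satisfies `A ∩ ker Q = 0` and `A + ker Q = Y`.
Hence `ker Q` is a common closed complement.
-/

open Submodule LinearMap

section CommonComplement

variable {R X F : Type*} [Ring R] [AddCommGroup X] [Module R X] [AddCommGroup F] [Module R F]
  {Y A : Submodule R X} (Q : Y →ₗ[R] F) (hA : A ≤ Y)

theorem Submodule.inf_map_ker_eq_bot_of_injective (hQ : Function.Injective (Q ∘ₗ inclusion hA)) :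
    A ⊓ (ker Q).map Y.subtype = ⊥ := by
  refine eq_bot_iff.mpr fun z ⟨hzA, w, hw, hwz⟩ => ?_
  have hzw : inclusion hA ⟨z, hzA⟩ = w := Subtype.ext hwz.symm
  have : (Q ∘ₗ inclusion hA) ⟨z, hzA⟩ = (Q ∘ₗ inclusion hA) 0 := by
    simpa [hzw] using hw
  simpa using congrArg Subtype.val (hQ this)

theorem Submodule.sup_map_ker_eq_of_surjective (hQ : Function.Surjective (Q ∘ₗ inclusion hA)) :
    A ⊔ (ker Q).map Y.subtype = Y := by
  refine le_antisymm (sup_le hA (map_subtype_le _ _)) fun z hz => ?_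
  obtain ⟨a, ha⟩ := hQ (Q ⟨z, hz⟩)
  have hker : ⟨z, hz⟩ - inclusion hA a ∈ ker Q := by simpa [sub_eq_zero] using ha.symm
  exact mem_sup.mpr ⟨a, a.2, _, mem_map_of_mem hker, by simp⟩

end CommonComplement

theorem Submodule.isClosed_map_subtype_ker {𝕜 X F : Type*} [Semiring 𝕜] [AddCommMonoid X]
    [Module 𝕜 X] [TopologicalSpace X] [AddCommMonoid F] [Module 𝕜 F] [TopologicalSpace F]
    [T1Space F] {Y : Submodule 𝕜 X} (hY : IsClosed (Y : Set X)) (Q : Y →L[𝕜] F) :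
    IsClosed ((ker (Q : Y →ₗ[𝕜] F)).map Y.subtype : Set X) :=
  hY.isClosedMap_subtype_val _ Q.isClosed_ker

section Extension

variable {𝕜 X F : Type*} [NontriviallyNormedField 𝕜] [NormedAddCommGroup X] [NormedSpace 𝕜 X]
  [NormedAddCommGroup F] [NormedSpace 𝕜 F] [CompleteSpace F]

theorem Submodule.denseRange_coprod_inclusion_topologicalClosure (M N : Submodule 𝕜 X) :
    DenseRange ((inclusion (le_sup_left.trans (M ⊔ N).le_topologicalClosure)).coprod
      (inclusion (le_sup_right.trans (M ⊔ N).le_topologicalClosure))) := by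
  rw [DenseRange, Subtype.dense_iff, ← Set.range_comp]
  refine (topologicalClosure_coe _).subset.trans (closure_mono fun z hz => ?_)
  obtain ⟨x, hx, y, hy, rfl⟩ := mem_sup.mp hz
  exact ⟨(⟨x, hx⟩, ⟨y, hy⟩), rfl⟩

theorem Submodule.exists_extension_topologicalClosure_sup {M N : Submodule 𝕜 X}
    (f : M →ₗ[𝕜] F) (g : N →ₗ[𝕜] F) (C : ℝ)
    (hfg : ∀ (x : M) (y : N), ‖f x + g y‖ ≤ C * ‖(x : X) + y‖) :
    ∃ Q : (M ⊔ N).topologicalClosure →L[𝕜] F,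
      (Q : _ →ₗ[𝕜] F) ∘ₗ inclusion (le_sup_left.trans (M ⊔ N).le_topologicalClosure) = f ∧
      (Q : _ →ₗ[𝕜] F) ∘ₗ inclusion (le_sup_right.trans (M ⊔ N).le_topologicalClosure) = g := by
  set e := (inclusion (le_sup_left.trans (M ⊔ N).le_topologicalClosure)).coprod
      (inclusion (le_sup_right.trans (M ⊔ N).le_topologicalClosure))
  have hdense : DenseRange e := denseRange_coprod_inclusion_topologicalClosure M N
  have hbound : ∃ C, ∀ v, ‖f.coprod g v‖ ≤ C * ‖e v‖ := ⟨C, fun v => hfg v.1 v.2⟩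
  refine ⟨(f.coprod g).extendOfNorm e, ?_, ?_⟩
  · ext x
    simpa [e] using extendOfNorm_eq hdense hbound (x, 0)
  · ext y
    simpa [e] using extendOfNorm_eq hdense hbound (0, y)

end Extension

theorem stmt_10_general {X : Type*} [NormedAddCommGroup X] [NormedSpace ℝ X] [CompleteSpace X]
    (M N : Submodule ℝ X) (hN : IsClosed (N : Set X))
    (U : M ≃L[ℝ] N) (C : ℝ)
    (hineq : ∀ (x : M) (y : N), ‖(U x : X) + (y : X)‖ ≤ C * ‖(x : X) + (y : X)‖) :
    ∃ K : Submodule ℝ X, IsClosed (K : Set X) ∧ K ≤ (M ⊔ N).topologicalClosure ∧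
      M ⊓ K = ⊥ ∧ M ⊔ K = (M ⊔ N).topologicalClosure ∧
      N ⊓ K = ⊥ ∧ N ⊔ K = (M ⊔ N).topologicalClosure := by
  have : CompleteSpace N := hN.completeSpace_coe
  obtain ⟨Q, hQM, hQN⟩ :=
    exists_extension_topologicalClosure_sup (U : M →ₗ[ℝ] N) LinearMap.id C hineq
  have hUbij : Function.Bijective (U : M →ₗ[ℝ] N) := U.bijective
  have hidbij : Function.Bijective (LinearMap.id : N →ₗ[ℝ] N) := Function.bijective_id
  rw [← hQM] at hUbij
  rw [← hQN] at hidbij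
  exact ⟨(ker (Q : (M ⊔ N).topologicalClosure →ₗ[ℝ] N)).map (M ⊔ N).topologicalClosure.subtype,
    isClosed_map_subtype_ker (isClosed_topologicalClosure _) Q, map_subtype_le _ _,
    inf_map_ker_eq_bot_of_injective _ _ hUbij.1, sup_map_ker_eq_of_surjective _ _ hUbij.2,
    inf_map_ker_eq_bot_of_injective _ _ hidbij.1, sup_map_ker_eq_of_surjective _ _ hidbij.2⟩

theorem stmt_10 {X : Type*} [NormedAddCommGroup X] [NormedSpace ℝ X] [CompleteSpace X]
    (M N : Submodule ℝ X) (hM : IsClosed (M : Set X)) (hN : IsClosed (N : Set X))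
    (U : M ≃L[ℝ] N) (C : ℝ) (hC : 1 ≤ C)
    (hid : ∀ x : M, (x : X) ∈ N → (U x : X) = (x : X))
    (hineq : ∀ (x : M) (y : N), ‖(U x : X) + (y : X)‖ ≤ C * ‖(x : X) + (y : X)‖) :
    ∃ K : Submodule ℝ X, IsClosed (K : Set X) ∧ K ≤ (M ⊔ N).topologicalClosure ∧
      M ⊓ K = ⊥ ∧ M ⊔ K = (M ⊔ N).topologicalClosure ∧
      N ⊓ K = ⊥ ∧ N ⊔ K = (M ⊔ N).topologicalClosure :=
  stmt_10_general M N hN U C hineq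
end

section
/- Let X be a Banach space and M, N closed subspaces of X such that M + N is closed and M ∩ N = {0}. Then M and N have a common complement in M ⊕ N if and only if M and N are isomorphic as Banach spaces. -/
/-!
If `K` is a common complement of `M` and `N`, the projection of `Y = M ⊕ K = N ⊕ K` onto `N`
along `K` maps `M` bijectively onto `N`, hence is an isomorphism by the open mapping theorem.
Conversely, an isomorphism `e : M ≃L N` gives the common complement `{m - e m | m ∈ M}`. It is
closed because, by the open mapping theorem again, `(m, n) ↦ m + n` is an isomorphism
`M × N ≃L M ⊕ N`, and it carries the closed graph of `-e` onto this subspace.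
-/

namespace Submodule

section Module

variable {R E : Type*} [Ring R] [AddCommGroup E] [Module R E] {M N : Submodule R E}

def skewDiagonal (e : M ≃ₗ[R] N) : Submodule R E :=
  LinearMap.range (M.subtype - N.subtype ∘ₗ e.toLinearMap)

variable (e : M ≃ₗ[R] N)

lemma skewDiagonal_le_sup : skewDiagonal e ≤ M ⊔ N := by
  rintro _ ⟨m, rfl⟩
  exact sub_mem (mem_sup_left m.2) (mem_sup_right (e m).2)

lemma disjoint_skewDiagonal_left (h : Disjoint M N) : Disjoint M (skewDiagonal e) := by
  rw [disjoint_def]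
  rintro _ hxM ⟨m, rfl⟩
  have hem : (e m : E) ∈ M := by simpa using M.sub_mem m.2 hxM
  have : m = 0 := e.map_eq_zero_iff.1 (Subtype.ext (disjoint_def.1 h _ hem (e m).2))
  simp [this]

lemma disjoint_skewDiagonal_right (h : Disjoint M N) : Disjoint N (skewDiagonal e) := by
  rw [disjoint_def]
  rintro _ hxN ⟨m, rfl⟩
  have hm : (m : E) ∈ N := by simpa using N.add_mem hxN (e m).2
  have : m = 0 := Subtype.ext (disjoint_def.1 h _ m.2 hm)
  simp [this]

lemma sup_skewDiagonal_left : M ⊔ skewDiagonal e = M ⊔ N := by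
  refine le_antisymm (sup_le le_sup_left (skewDiagonal_le_sup e)) (sup_le le_sup_left ?_)
  intro n hn
  have hsub : ((e.symm ⟨n, hn⟩ : M) : E) - e (e.symm ⟨n, hn⟩) ∈ skewDiagonal e := ⟨_, rfl⟩
  simpa using sub_mem (mem_sup_left (e.symm ⟨n, hn⟩).2) (mem_sup_right hsub)

lemma sup_skewDiagonal_right : N ⊔ skewDiagonal e = M ⊔ N := by
  refine le_antisymm (sup_le le_sup_right (skewDiagonal_le_sup e)) (sup_le ?_ le_sup_left)
  intro m hm
  have hsub : (m : E) - e ⟨m, hm⟩ ∈ skewDiagonal e := ⟨⟨m, hm⟩, rfl⟩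
  simpa using add_mem (mem_sup_left (e ⟨m, hm⟩).2) (mem_sup_right hsub)

end Module

section Banach

variable {𝕜 X : Type*} [NontriviallyNormedField 𝕜] [NormedAddCommGroup X] [NormedSpace 𝕜 X]
  {M N K : Submodule 𝕜 X}

def addL (M N : Submodule 𝕜 X) : M × N →L[𝕜] ↥(M ⊔ N) :=
  (M.subtypeL.coprod N.subtypeL).codRestrict (M ⊔ N) fun p => add_mem_sup p.1.2 p.2.2

lemma ker_addL (h : Disjoint M N) : (addL M N).ker = ⊥ := by
  rw [LinearMap.ker_eq_bot']
  rintro ⟨m, n⟩ hmn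
  have hsum : (m : X) + n = 0 := congrArg Subtype.val hmn
  have hm : (m : X) = 0 :=
    disjoint_def.1 h _ m.2 (by simp [eq_neg_of_add_eq_zero_left hsum])
  ext <;> simp_all

lemma range_addL : (addL M N).range = ⊤ := by
  rw [LinearMap.range_eq_top]
  rintro ⟨x, hx⟩
  obtain ⟨m, hm, n, hn, rfl⟩ := mem_sup.1 hx
  exact ⟨(⟨m, hm⟩, ⟨n, hn⟩), rfl⟩

variable [CompleteSpace X]

noncomputable def prodEquivSupOfDisjoint (hM : IsClosed (M : Set X)) (hN : IsClosed (N : Set X))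
    (hMN : IsClosed ((M ⊔ N : Submodule 𝕜 X) : Set X)) (h : Disjoint M N) :
    (M × N) ≃L[𝕜] ↥(M ⊔ N) :=
  haveI := hM.completeSpace_coe
  haveI := hN.completeSpace_coe
  haveI := hMN.completeSpace_coe
  .ofBijective (addL M N) (ker_addL h) range_addL

@[simp]
lemma coe_prodEquivSupOfDisjoint_apply (hM : IsClosed (M : Set X)) (hN : IsClosed (N : Set X))
    (hMN : IsClosed ((M ⊔ N : Submodule 𝕜 X) : Set X)) (h : Disjoint M N) (p : M × N) :
    (prodEquivSupOfDisjoint hM hN hMN h p : X) = p.1 + p.2 :=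
  rfl

lemma prodEquivSupOfDisjoint_symm_eq_iff (hM : IsClosed (M : Set X)) (hN : IsClosed (N : Set X))
    (hMN : IsClosed ((M ⊔ N : Submodule 𝕜 X) : Set X)) (h : Disjoint M N) (y : ↥(M ⊔ N))
    (p : M × N) :
    (prodEquivSupOfDisjoint hM hN hMN h).symm y = p ↔ (y : X) = p.1 + p.2 :=
  (ContinuousLinearEquiv.symm_apply_eq _).trans Subtype.ext_iff

lemma isClosed_skewDiagonal (hM : IsClosed (M : Set X)) (hN : IsClosed (N : Set X))
    (hMN : IsClosed ((M ⊔ N : Submodule 𝕜 X) : Set X)) (h : Disjoint M N) (e : M ≃L[𝕜] N) :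
    IsClosed (skewDiagonal e.toLinearEquiv : Set X) := by
  let ψ := prodEquivSupOfDisjoint hM hN hMN h
  have hgraph : IsClosed {p : M × N | p.2 = -e p.1} := isClosed_eq continuous_snd (by fun_prop)
  have himage : (skewDiagonal e.toLinearEquiv : Set X) =
      Subtype.val '' (ψ '' {p : M × N | p.2 = -e p.1}) := by
    ext x
    constructor
    · rintro ⟨m, rfl⟩
      exact ⟨ψ (m, -e m), ⟨(m, -e m), rfl, rfl⟩, by simp [ψ, sub_eq_add_neg]⟩
    · rintro ⟨_, ⟨⟨m, n⟩, hmn, rfl⟩, rfl⟩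
      obtain rfl : n = -e m := hmn
      exact ⟨m, by simp [ψ, sub_eq_add_neg]⟩
  rw [himage]
  exact hMN.isClosedMap_subtype_val _ (ψ.toHomeomorph.isClosedMap _ hgraph)

theorem nonempty_equiv_of_sup_eq (hM : IsClosed (M : Set X)) (hN : IsClosed (N : Set X))
    (hK : IsClosed (K : Set X)) (hNK : IsClosed ((N ⊔ K : Submodule 𝕜 X) : Set X))
    (hMK_disj : Disjoint M K) (hNK_disj : Disjoint N K) (hsup : M ⊔ K = N ⊔ K) :
    Nonempty (M ≃L[𝕜] N) := by
  have := hM.completeSpace_coe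
  have := hN.completeSpace_coe
  have hMle : M ≤ N ⊔ K := hsup ▸ le_sup_left
  have hNle : N ≤ M ⊔ K := hsup ▸ le_sup_left
  let ψ := prodEquivSupOfDisjoint hN hK hNK hNK_disj
  let ι : M →L[𝕜] ↥(N ⊔ K) :=
    M.subtypeL.codRestrict (N ⊔ K) fun m => hMle m.2
  let f : M →L[𝕜] N := ContinuousLinearMap.fst 𝕜 N K ∘L (ψ.symm : _ →L[𝕜] _) ∘L ι
  have hf : ∀ (m : M) (n : N) (k : K), (m : X) = n + k → f m = n := fun m n k hmnk => by
    have hψ : ψ.symm (ι m) = (n, k) :=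
      (prodEquivSupOfDisjoint_symm_eq_iff hN hK hNK hNK_disj (ι m) (n, k)).2 hmnk
    simp [f, hψ]
  have hker : f.ker = ⊥ := by
    rw [LinearMap.ker_eq_bot']
    intro m hm
    obtain ⟨n, hn, k, hk, hnk⟩ := mem_sup.1 (hMle m.2)
    obtain rfl : n = 0 := congrArg Subtype.val ((hf m ⟨n, hn⟩ ⟨k, hk⟩ hnk.symm).symm.trans hm)
    exact Subtype.ext (disjoint_def.1 hMK_disj _ m.2 (by simpa [← hnk] using hk))
  have hrange : f.range = ⊤ := by
    rw [LinearMap.range_eq_top]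
    intro n
    obtain ⟨m, hm, k, hk, hmk⟩ := mem_sup.1 (hNle n.2)
    exact ⟨⟨m, hm⟩, hf _ n ⟨-k, K.neg_mem hk⟩ (by simp [← hmk])⟩
  exact ⟨.ofBijective f hker hrange⟩

end Banach

end Submodule

open Submodule in
theorem stmt_11 {X : Type*} [NormedAddCommGroup X] [NormedSpace ℝ X] [CompleteSpace X]
    (M N : Submodule ℝ X) (hM : IsClosed (M : Set X)) (hN : IsClosed (N : Set X))
    (hsum : IsClosed ((M ⊔ N : Submodule ℝ X) : Set X)) (hint : M ⊓ N = ⊥) :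
    (∃ K : Submodule ℝ X, IsClosed (K : Set X) ∧ K ≤ M ⊔ N ∧
        M ⊓ K = ⊥ ∧ M ⊔ K = M ⊔ N ∧ N ⊓ K = ⊥ ∧ N ⊔ K = M ⊔ N) ↔
      Nonempty (M ≃L[ℝ] N) := by
  constructor
  · rintro ⟨K, hK, -, hMK, hMK_sup, hNK, hNK_sup⟩
    exact nonempty_equiv_of_sup_eq hM hN hK (hNK_sup ▸ hsum) (disjoint_iff.2 hMK)
      (disjoint_iff.2 hNK) (hMK_sup.trans hNK_sup.symm)
  · rintro ⟨e⟩
    have hMN : Disjoint M N := disjoint_iff.2 hint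
    exact ⟨skewDiagonal e.toLinearEquiv, isClosed_skewDiagonal hM hN hsum hMN e,
      skewDiagonal_le_sup _, disjoint_iff.1 (disjoint_skewDiagonal_left _ hMN),
      sup_skewDiagonal_left _, disjoint_iff.1 (disjoint_skewDiagonal_right _ hMN),
      sup_skewDiagonal_right _⟩
end

section
/- Let X be a Hilbert space and M, N closed subspaces with a common complement in X. Then for each closed subspace M₁ of M with dim M₁ = ∞ and dim(M ⊖ M₁) = ∞, there exists a closed subspace N₁ of N with dim N₁ = ∞ and dim(N ⊖ N₁) = ∞ such that M₁ + N₁ is closed and M₁ ∩ N₁ = {0}. -/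
/-!
Let `K` be the common complement, `f` the projection onto `N` along `K` and `g` the projection
onto `M` along `K`. Since `x - f x ∈ K = ker g`, `g` inverts `f` on `M`, so `f` maps `M`
isomorphically and homeomorphically onto its image in `N`. Take `N₁ = f (M ⊖ M₁)`: it is closed and
infinite dimensional, and `f M₁` meets it trivially, so `M₁` embeds into `N ⊖ N₁`. Writing `Q` for
the orthogonal projection onto `M₁`, the sum `M₁ + N₁` is the image of `M` under
`x ↦ Q x + f (x - Q x)`, which `g` again inverts on `M`; hence it is closed, and `g` also shows
`M₁ ∩ N₁ = 0`.
-/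

open Submodule

theorem Set.LeftInvOn.isClosed_image {α β : Type*} [TopologicalSpace α] [TopologicalSpace β]
    [T2Space β] {f : α → β} {g : β → α} {s : Set α} (h : Set.LeftInvOn g f s)
    (hf : Continuous f) (hg : Continuous g) (hs : IsClosed s) : IsClosed (f '' s) := by
  have himage : f '' s = g ⁻¹' s ∩ {y | f (g y) = y} := by
    ext y
    constructor
    · rintro ⟨x, hx, rfl⟩
      exact ⟨by simpa only [Set.mem_preimage, h hx], congrArg f (h hx)⟩
    · rintro ⟨hy, hfgy⟩
      exact ⟨g y, hy, hfgy⟩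
  rw [himage]
  exact (hs.preimage hg).inter (isClosed_eq (hf.comp hg) continuous_id)

section Module

variable {R E : Type*} [Ring R] [AddCommGroup E] [Module R E]

theorem Submodule.projection_projection_of_isCompl {p q r : Submodule R E} (hp : IsCompl p r)
    (hq : IsCompl q r) (x : E) :
    p.projection r hp (q.projection r hq x) = p.projection r hp x := by
  rw [eq_comm, ← sub_eq_zero, ← map_sub, projection_apply_eq_zero_iff]
  exact sub_projection_mem hq x

theorem Submodule.disjoint_map_of_injOn {F : Type*} [AddCommGroup F] [Module R F]
    {f : E →ₗ[R] F} {p q : Submodule R E} (hf : Set.InjOn f ↑(p ⊔ q)) (hpq : Disjoint p q) :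
    Disjoint (p.map f) (q.map f) := by
  rw [disjoint_iff_inf_le]
  rintro _ ⟨⟨x, hx, rfl⟩, ⟨y, hy, hxy⟩⟩
  obtain rfl : y = x := hf (mem_sup_right hy) (mem_sup_left hx) hxy
  rw [disjoint_def.1 hpq y hx hy, map_zero]
  exact zero_mem _

theorem Submodule.disjoint_map_of_leftInvOn {M A B : Submodule R E} {f g : E →ₗ[R] E}
    (hg : ∀ x ∈ M, g x = x) (hgf : Set.LeftInvOn g f M) (hA : A ≤ M) (hB : B ≤ M)
    (hAB : Disjoint A B) : Disjoint A (B.map f) := by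
  rw [disjoint_iff_inf_le]
  rintro _ ⟨hy, ⟨b, hb, rfl⟩⟩
  have hfb : f b = b := (hg _ (hA hy)).symm.trans (hgf (hB hb))
  rw [hfb] at hy ⊢
  exact (mem_bot R).2 (disjoint_def.1 hAB b hy hb)

end Module

section InnerProductSpace

variable {𝕜 E : Type*} [RCLike 𝕜] [NormedAddCommGroup E] [InnerProductSpace 𝕜 E]

theorem Submodule.finiteDimensional_of_finiteDimensional_inf_orthogonal {A L N : Submodule 𝕜 E}
    [L.HasOrthogonalProjection] (hA : A ≤ N) (hL : L ≤ N) (hAL : Disjoint A L)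
    [FiniteDimensional 𝕜 (N ⊓ Lᗮ : Submodule 𝕜 E)] : FiniteDimensional 𝕜 A := by
  let φ : A →ₗ[𝕜] (N ⊓ Lᗮ : Submodule 𝕜 E) :=
    (Lᗮ.starProjection : E →ₗ[𝕜] E).restrict fun x hx ↦
      ⟨by rw [ContinuousLinearMap.coe_coe, starProjection_orthogonal_val]
          exact N.sub_mem (hA hx) (hL (L.starProjection_apply_mem x)),
        Lᗮ.starProjection_apply_mem x⟩
  refine FiniteDimensional.of_injective φ ((injective_iff_map_eq_zero φ).2 fun x hx ↦ ?_)
  have hxL : (x : E) ∈ L := by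
    rw [← Submodule.orthogonal_orthogonal L, ← starProjection_apply_eq_zero_iff]
    exact congrArg Subtype.val hx
  exact Subtype.ext (disjoint_def.1 hAL x x.2 hxL)

theorem Submodule.coe_sup_map_inf_orthogonal {M M₁ : Submodule 𝕜 E} [M₁.HasOrthogonalProjection]
    (hM₁ : M₁ ≤ M) (f : E →ₗ[𝕜] E) :
    ((M₁ ⊔ (M ⊓ M₁ᗮ).map f : Submodule 𝕜 E) : Set E) =
      (fun x ↦ M₁.starProjection x + f (x - M₁.starProjection x)) '' M := by
  ext y
  constructor
  · intro hy
    obtain ⟨a, ha, _, ⟨b, ⟨hbM, hb⟩, rfl⟩, rfl⟩ := mem_sup.1 hy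
    refine ⟨a + b, M.add_mem (hM₁ ha) hbM, ?_⟩
    have hQ : M₁.starProjection (a + b) = a := by
      rw [map_add, starProjection_eq_self_iff.2 ha, (starProjection_apply_eq_zero_iff M₁).2 hb,
        add_zero]
    simp only [hQ, add_sub_cancel_left]
  · rintro ⟨x, hx, rfl⟩
    have hQx := M₁.starProjection_apply_mem x
    exact add_mem (mem_sup_left hQx) (mem_sup_right
      (mem_map_of_mem ⟨M.sub_mem hx (hM₁ hQx), sub_starProjection_mem_orthogonal x⟩))

theorem Submodule.isClosed_sup_map_inf_orthogonal {M M₁ : Submodule 𝕜 E}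
    [M₁.HasOrthogonalProjection] {f g : E →L[𝕜] E} (hM : IsClosed (M : Set E)) (hM₁ : M₁ ≤ M)
    (hg : ∀ x ∈ M, g x = x) (hgf : Set.LeftInvOn g f M) :
    IsClosed ((M₁ ⊔ (M ⊓ M₁ᗮ).map (f : E →ₗ[𝕜] E) : Submodule 𝕜 E) : Set E) := by
  rw [coe_sup_map_inf_orthogonal hM₁]
  refine Set.LeftInvOn.isClosed_image (fun x hx ↦ ?_) (by fun_prop) g.continuous hM
  have hQx : M₁.starProjection x ∈ M := hM₁ (M₁.starProjection_apply_mem x)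
  simp only [ContinuousLinearMap.coe_coe, map_add]
  rw [hg _ hQx, hgf (M.sub_mem hx hQx), add_sub_cancel]

end InnerProductSpace

theorem stmt_13 {X : Type*} [NormedAddCommGroup X] [InnerProductSpace ℝ X] [CompleteSpace X]
    (M N : Submodule ℝ X) (hM : IsClosed (M : Set X)) (hN : IsClosed (N : Set X))
    (h : ∃ K : Submodule ℝ X, IsClosed (K : Set X) ∧
        M ⊓ K = ⊥ ∧ M ⊔ K = ⊤ ∧ N ⊓ K = ⊥ ∧ N ⊔ K = ⊤)
    (M₁ : Submodule ℝ X) (hM₁ : IsClosed (M₁ : Set X)) (hM₁M : M₁ ≤ M)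
    (hinf : ¬ FiniteDimensional ℝ M₁)
    (hcoinf : ¬ FiniteDimensional ℝ (M ⊓ M₁ᗮ : Submodule ℝ X)) :
    ∃ N₁ : Submodule ℝ X, IsClosed (N₁ : Set X) ∧ N₁ ≤ N ∧
      ¬ FiniteDimensional ℝ N₁ ∧ ¬ FiniteDimensional ℝ (N ⊓ N₁ᗮ : Submodule ℝ X) ∧
      IsClosed ((M₁ ⊔ N₁ : Submodule ℝ X) : Set X) ∧ M₁ ⊓ N₁ = ⊥ := by
  obtain ⟨K, hK, hMK_inf, hMK_sup, hNK_inf, hNK_sup⟩ := h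
  have hMK : IsTopCompl M K :=
    IsCompl.isTopCompl_of_isClosed ⟨disjoint_iff.2 hMK_inf, codisjoint_iff.2 hMK_sup⟩ hM hK
  have hNK : IsTopCompl N K :=
    IsCompl.isTopCompl_of_isClosed ⟨disjoint_iff.2 hNK_inf, codisjoint_iff.2 hNK_sup⟩ hN hK
  set f := N.projectionL K hNK
  set g := M.projectionL K hMK
  have hg : ∀ x ∈ M, g x = x := fun x ↦ (projectionL_eq_self_iff hMK x).2
  have hgf : Set.LeftInvOn g f M := fun x hx ↦ by
    simp only [g, f, coe_projectionL, projection_projection_of_isCompl]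
    exact hg x hx
  have : CompleteSpace M₁ := hM₁.completeSpace_coe
  have hM₂ : IsClosed ((M ⊓ M₁ᗮ : Submodule ℝ X) : Set X) := hM.inter M₁.isClosed_orthogonal
  have hM₁M₂ : Disjoint M₁ (M ⊓ M₁ᗮ) := M₁.orthogonal_disjoint.mono_right inf_le_right
  set N₁ := (M ⊓ M₁ᗮ).map (f : X →ₗ[ℝ] X)
  have hN₁ : IsClosed (N₁ : Set X) :=
    (hgf.mono inf_le_left).isClosed_image f.continuous g.continuous hM₂
  have : CompleteSpace N₁ := hN₁.completeSpace_coe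
  have hfN : ∀ p : Submodule ℝ X, p.map (f : X →ₗ[ℝ] X) ≤ N :=
    fun p ↦ map_le_iff_le_comap.2 fun x _ ↦ projectionL_apply_mem hNK x
  refine ⟨N₁, hN₁, hfN _, fun _ ↦ hcoinf ?_, fun _ ↦ hinf ?_,
    isClosed_sup_map_inf_orthogonal hM hM₁M hg hgf,
    disjoint_iff.1 (disjoint_map_of_leftInvOn hg hgf hM₁M inf_le_left hM₁M₂)⟩
  · exact .of_injective _ (LinearMap.submoduleMap_injective_of_injOn (hgf.injOn.mono inf_le_left))
  · have := finiteDimensional_of_finiteDimensional_inf_orthogonal (hfN M₁) (hfN _)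
      (disjoint_map_of_injOn (hgf.injOn.mono (sup_le hM₁M inf_le_left)) hM₁M₂)
    exact .of_injective _ (LinearMap.submoduleMap_injective_of_injOn (hgf.injOn.mono hM₁M))
end

section
/- Let X be a Banach space and M, N closed subspaces of X. Then M and N have a common complement in X if and only if there exist Banach spaces X₁, X₂ and bounded linear operators T, S : X₁ → X₂ such that the pair {M, N} is isomorphic to the pair {Gr(T), Gr(S)}, i.e. there is a bounded linear bijection with bounded inverse from X onto X₁ × X₂ mapping M onto the graph of T and N onto the graph of S. -/
/-!
In a product `E × F` of Banach spaces, a subspace is the graph of a bounded operator `E → F`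
exactly when it is closed and complementary to `ker fst = 0 × F`: the first projection is then
a linear bijection from the subspace onto `E`, and the resulting linear map has closed graph.
A closed common complement `K` of `M` and `N` identifies `X` with `M × K` so that `K` becomes
`0 × K`, which turns `M` and `N` into graphs; conversely, the preimage of `0 × X₂` is a closed
common complement of the two preimages of graphs.
-/

open LinearMap Submodule

section Graph

variable {R M M₂ : Type*} [Ring R] [AddCommGroup M] [AddCommGroup M₂] [Module R M] [Module R M₂]

theorem LinearMap.isCompl_graph_ker_fst (f : M →ₗ[R] M₂) :
    IsCompl f.graph (ker (LinearMap.fst R M M₂)) := by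
  refine ⟨disjoint_def.2 fun x hxG hx0 => ?_, codisjoint_iff.2 (eq_top_iff.2 fun x _ => ?_)⟩
  · rw [mem_graph_iff] at hxG
    rw [mem_ker, fst_apply] at hx0
    exact Prod.ext hx0 (by rw [hxG, hx0, map_zero]; rfl)
  · have hx : x = (x.1, f x.1) + (0, x.2 - f x.1) := by ext <;> simp
    rw [hx]
    exact add_mem_sup (by simp [mem_graph_iff]) (by simp)

theorem Submodule.bijective_fst_comp_subtype_of_isCompl_ker_fst {G : Submodule R (M × M₂)}
    (h : IsCompl G (ker (LinearMap.fst R M M₂))) : Function.Bijective (Prod.fst ∘ G.subtype) := by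
  refine ⟨fun g₁ g₂ hg => ?_, fun x => ?_⟩
  · have hsub : (g₁ : M × M₂) - g₂ ∈ G ⊓ ker (LinearMap.fst R M M₂) :=
      ⟨G.sub_mem g₁.2 g₂.2, by simpa [sub_eq_zero] using hg⟩
    rw [h.inf_eq_bot, mem_bot, sub_eq_zero] at hsub
    exact Subtype.ext hsub
  · obtain ⟨g, hg, k, hk, hgk⟩ := mem_sup.1 (h.sup_eq_top ▸ mem_top : ((x, 0) : M × M₂) ∈ G ⊔ _)
    refine ⟨⟨g, hg⟩, ?_⟩
    rw [mem_ker, fst_apply] at hk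
    simpa [hk] using congrArg Prod.fst hgk

end Graph

section ClosedGraph

variable {𝕜 X E F : Type*} [NontriviallyNormedField 𝕜]
  [NormedAddCommGroup X] [NormedSpace 𝕜 X]
  [NormedAddCommGroup E] [NormedSpace 𝕜 E] [CompleteSpace E]
  [NormedAddCommGroup F] [NormedSpace 𝕜 F] [CompleteSpace F]

theorem Submodule.exists_eq_graph_of_isClosed_of_isCompl_ker_fst {G : Submodule 𝕜 (E × F)}
    (hG : IsClosed (G : Set (E × F))) (h : IsCompl G (ker (LinearMap.fst 𝕜 E F))) :
    ∃ T : E →L[𝕜] F, G = (T : E →ₗ[𝕜] F).graph := by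
  obtain ⟨f, rfl⟩ := exists_eq_graph (bijective_fst_comp_subtype_of_isCompl_ker_fst h)
  exact ⟨.ofIsClosedGraph hG, by rw [ContinuousLinearMap.coe_ofIsClosedGraph]⟩

theorem ContinuousLinearEquiv.isCompl_comap_ker_fst_iff_exists_map_eq_graph
    (e : X ≃L[𝕜] E × F) {P : Submodule 𝕜 X} (hP : IsClosed (P : Set X)) :
    IsCompl P (comap (e : X →ₗ[𝕜] E × F) (ker (LinearMap.fst 𝕜 E F))) ↔
      ∃ T : E →L[𝕜] F, map (e : X →ₗ[𝕜] E × F) P = (T : E →ₗ[𝕜] F).graph := by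
  have hcomap : comap (e : X →ₗ[𝕜] E × F) (ker (LinearMap.fst 𝕜 E F)) =
      (orderIsoMapComap e.toLinearEquiv).symm (ker (LinearMap.fst 𝕜 E F)) := rfl
  rw [hcomap, (orderIsoMapComap e.toLinearEquiv).isCompl_iff, OrderIso.apply_symm_apply]
  change IsCompl (map (e : X →ₗ[𝕜] E × F) P) _ ↔ _
  constructor
  · have hPe : IsClosed (map (e : X →ₗ[𝕜] E × F) P : Set (E × F)) := by
      rw [map_coe]
      exact e.isClosed_image.2 hP
    exact exists_eq_graph_of_isClosed_of_isCompl_ker_fst hPe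
  · rintro ⟨T, hT⟩
    rw [hT]
    exact isCompl_graph_ker_fst _

end ClosedGraph

theorem Submodule.comap_symm_prodEquivOfIsTopCompl_ker_fst {R E : Type*} [Ring R]
    [TopologicalSpace E] [AddCommGroup E] [Module R E] [IsTopologicalAddGroup E]
    {p q : Submodule R E} (h : IsTopCompl p q) :
    comap ((prodEquivOfIsTopCompl p q h).symm : E →ₗ[R] p × q) (ker (LinearMap.fst R p q)) = q := by
  ext x
  simp

theorem stmt_14 {X : Type u} [NormedAddCommGroup X] [NormedSpace ℝ X] [CompleteSpace X]
    (M N : Submodule ℝ X) (hM : IsClosed (M : Set X)) (hN : IsClosed (N : Set X)) :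
    (∃ K : Submodule ℝ X, IsClosed (K : Set X) ∧
        M ⊓ K = ⊥ ∧ M ⊔ K = ⊤ ∧ N ⊓ K = ⊥ ∧ N ⊔ K = ⊤) ↔
      ∃ (X₁ X₂ : Type u) (_ : NormedAddCommGroup X₁) (_ : NormedSpace ℝ X₁)
        (_ : CompleteSpace X₁) (_ : NormedAddCommGroup X₂) (_ : NormedSpace ℝ X₂)
        (_ : CompleteSpace X₂) (T S : X₁ →L[ℝ] X₂) (e : X ≃L[ℝ] X₁ × X₂),
        Submodule.map ((e : X →L[ℝ] X₁ × X₂) : X →ₗ[ℝ] X₁ × X₂) M = LinearMap.graph (T : X₁ →ₗ[ℝ] X₂) ∧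
        Submodule.map ((e : X →L[ℝ] X₁ × X₂) : X →ₗ[ℝ] X₁ × X₂) N = LinearMap.graph (S : X₁ →ₗ[ℝ] X₂) := by
  constructor
  · rintro ⟨K, hK, hMK₁, hMK₂, hNK₁, hNK₂⟩
    have hMK : IsTopCompl M K := (IsCompl.of_eq hMK₁ hMK₂).isTopCompl_of_isClosed hM hK
    have : CompleteSpace M := hM.completeSpace_coe
    have : CompleteSpace K := hK.completeSpace_coe
    let e := (prodEquivOfIsTopCompl M K hMK).symm
    have hKe : comap (e : X →ₗ[ℝ] M × K) _ = K := comap_symm_prodEquivOfIsTopCompl_ker_fst hMK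
    obtain ⟨T, hT⟩ := (e.isCompl_comap_ker_fst_iff_exists_map_eq_graph hM).1
      (by rw [hKe]; exact hMK.isCompl)
    obtain ⟨S, hS⟩ := (e.isCompl_comap_ker_fst_iff_exists_map_eq_graph hN).1
      (by rw [hKe]; exact .of_eq hNK₁ hNK₂)
    exact ⟨M, K, _, _, ‹_›, _, _, ‹_›, T, S, e, hT, hS⟩
  · rintro ⟨X₁, X₂, _, _, _, _, _, _, T, S, e, hT, hS⟩
    have hMK := (e.isCompl_comap_ker_fst_iff_exists_map_eq_graph hM).2 ⟨T, hT⟩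
    have hNK := (e.isCompl_comap_ker_fst_iff_exists_map_eq_graph hN).2 ⟨S, hS⟩
    refine ⟨_, ?_, hMK.inf_eq_bot, hMK.sup_eq_top, hNK.inf_eq_bot, hNK.sup_eq_top⟩
    exact (ContinuousLinearMap.fst ℝ X₁ X₂ ∘L (e : X →L[ℝ] X₁ × X₂)).isClosed_ker
end

section
/- Let X be a Banach space, M and N closed subspaces of X with closure(M + N) = X, S : X → X a bounded linear operator with S² = I, and C > 0 a constant such that ‖x + Sx‖ ≥ C‖x‖ for all x ∈ M, and S(M) = N. Then M and N have a common complement in X, namely the eigenspace K = {x ∈ X : Sx = −x}. -/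
/-!
Write `A = 1 + S`, so that `K = ker A` is the `-1`-eigenspace of `S`. The estimate says that `A`
is bounded below on `M`; hence `A` is injective on `M` and, `M` being complete, `A(M)` is closed.
Since `A S = A`, also `A(N) = A(M)`, so `A` maps the dense subspace `M + N`, and therefore all of
`X`, into `A(M)`: every `x` differs from some `m ∈ M` by an element of `K`. Thus `X = M ⊕ K`, and
applying the involution `S`, which maps `M` onto `N` and `K` onto itself, gives `X = N ⊕ K`.
-/

namespace ContinuousLinearMap

variable {𝕜 E F : Type*} [NormedField 𝕜] [NormedAddCommGroup E] [NormedSpace 𝕜 E]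
  [NormedAddCommGroup F] [NormedSpace 𝕜 F] {f : E →L[𝕜] F} {M : Submodule 𝕜 E} {C : ℝ}

theorem disjoint_ker_of_bound (hC : 0 < C) (hbound : ∀ x ∈ M, C * ‖x‖ ≤ ‖f x‖) :
    Disjoint M (LinearMap.ker (f : E →ₗ[𝕜] F)) := by
  refine Submodule.disjoint_def.mpr fun x hxM hxK => ?_
  have hfx : f x = 0 := hxK
  have hx : C * ‖x‖ ≤ 0 := by simpa [hfx] using hbound x hxM
  exact norm_le_zero_iff.mp (nonpos_of_mul_nonpos_right hx hC)

theorem isClosed_map_of_bound [CompleteSpace E] (hM : IsClosed (M : Set E)) (hC : 0 < C)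
    (hbound : ∀ x ∈ M, C * ‖x‖ ≤ ‖f x‖) : IsClosed (M.map (f : E →ₗ[𝕜] F) : Set F) := by
  have : CompleteSpace M := hM.completeSpace_coe
  have hanti : AntilipschitzWith C.toNNReal⁻¹ (f.comp M.subtypeL) :=
    antilipschitz_of_bound _ fun x => by
      rw [NNReal.coe_inv, Real.coe_toNNReal _ hC.le, inv_mul_eq_div, le_div_iff₀ hC, mul_comm]
      exact hbound x x.2
  convert hanti.isClosed_range (f.comp M.subtypeL).uniformContinuous using 1
  ext
  simp

theorem range_le_of_map_dense_le {D : Submodule 𝕜 E} {L : Submodule 𝕜 F} (hD : Dense (D : Set E))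
    (hL : IsClosed (L : Set F)) (h : D.map (f : E →ₗ[𝕜] F) ≤ L) :
    LinearMap.range (f : E →ₗ[𝕜] F) ≤ L := by
  rintro _ ⟨x, rfl⟩
  have hx : f x ∈ closure (f '' D) := image_closure_subset_closure_image f.continuous
    ⟨x, hD.closure_eq ▸ Set.mem_univ x, rfl⟩
  refine closure_minimal ?_ hL hx
  rintro _ ⟨y, hy, rfl⟩
  exact h ⟨y, hy, rfl⟩

theorem isCompl_ker_of_bound [CompleteSpace E] {D : Submodule 𝕜 E} (hM : IsClosed (M : Set E))
    (hC : 0 < C) (hbound : ∀ x ∈ M, C * ‖x‖ ≤ ‖f x‖) (hD : Dense (D : Set E))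
    (hDM : D.map (f : E →ₗ[𝕜] F) ≤ M.map (f : E →ₗ[𝕜] F)) :
    IsCompl M (LinearMap.ker (f : E →ₗ[𝕜] F)) := by
  refine ⟨disjoint_ker_of_bound hC hbound, Submodule.map_eq_range_iff.mp ?_⟩
  exact le_antisymm LinearMap.map_le_range
    (range_le_of_map_dense_le hD (isClosed_map_of_bound hM hC hbound) hDM)

end ContinuousLinearMap

namespace Submodule

variable {R E F : Type*} [Semiring R] [AddCommMonoid E] [Module R E] [AddCommMonoid F] [Module R F]
  {S : E →ₗ[R] E} {A : E →ₗ[R] F}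

theorem map_ker_eq_of_comp_eq (hS : Function.Involutive S) (hAS : A ∘ₗ S = A) :
    (LinearMap.ker A).map S = LinearMap.ker A := by
  have hle : (LinearMap.ker A).map S ≤ LinearMap.ker A :=
    map_le_iff_le_comap.mpr (by rw [← LinearMap.ker_comp, hAS])
  have hSS : S ∘ₗ S = LinearMap.id := LinearMap.ext hS
  refine le_antisymm hle ?_
  simpa only [← map_comp, hSS, map_id] using map_mono (f := S) hle

theorem isCompl_map_of_involutive {M : Submodule R E} (hS : Function.Involutive S)
    (hAS : A ∘ₗ S = A) (hM : IsCompl M (LinearMap.ker A)) :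
    IsCompl (M.map S) (LinearMap.ker A) := by
  have := (orderIsoMapComap (LinearEquiv.ofInvolutive S hS)).isCompl_iff.mp hM
  rwa [← map_ker_eq_of_comp_eq hS hAS]

end Submodule

theorem stmt_16_general {X : Type*} [NormedAddCommGroup X] [NormedSpace ℝ X] [CompleteSpace X]
    (M N : Submodule ℝ X) (hM : IsClosed (M : Set X))
    (hdense : Dense ((M ⊔ N : Submodule ℝ X) : Set X))
    (S : X →L[ℝ] X) (hS : S ∘L S = ContinuousLinearMap.id ℝ X)
    (hSMN : Submodule.map (S : X →ₗ[ℝ] X) M = N)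
    (C : ℝ) (hC : 0 < C) (hbound : ∀ x ∈ M, C * ‖x‖ ≤ ‖x + S x‖) :
    IsClosed ((LinearMap.ker ((ContinuousLinearMap.id ℝ X + S : X →L[ℝ] X) : X →ₗ[ℝ] X) : Submodule ℝ X) : Set X) ∧
      M ⊓ LinearMap.ker ((ContinuousLinearMap.id ℝ X + S : X →L[ℝ] X) : X →ₗ[ℝ] X) = ⊥ ∧
      M ⊔ LinearMap.ker ((ContinuousLinearMap.id ℝ X + S : X →L[ℝ] X) : X →ₗ[ℝ] X) = ⊤ ∧
      N ⊓ LinearMap.ker ((ContinuousLinearMap.id ℝ X + S : X →L[ℝ] X) : X →ₗ[ℝ] X) = ⊥ ∧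
      N ⊔ LinearMap.ker ((ContinuousLinearMap.id ℝ X + S : X →L[ℝ] X) : X →ₗ[ℝ] X) = ⊤ := by
  set A : X →L[ℝ] X := ContinuousLinearMap.id ℝ X + S
  have hinv : Function.Involutive S := ContinuousLinearMap.ext_iff.mp hS
  have hAS : (A : X →ₗ[ℝ] X) ∘ₗ (S : X →ₗ[ℝ] X) = A :=
    LinearMap.ext fun x => by simp [A, hinv x, add_comm]
  have hAN : (M ⊔ N).map (A : X →ₗ[ℝ] X) ≤ M.map (A : X →ₗ[ℝ] X) := by
    rw [Submodule.map_sup, ← hSMN, ← Submodule.map_comp, hAS, sup_idem]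
  have hMK : IsCompl M (LinearMap.ker (A : X →ₗ[ℝ] X)) :=
    ContinuousLinearMap.isCompl_ker_of_bound hM hC hbound hdense hAN
  have hNK : IsCompl N (LinearMap.ker (A : X →ₗ[ℝ] X)) :=
    hSMN ▸ Submodule.isCompl_map_of_involutive hinv hAS hMK
  exact ⟨A.isClosed_ker, hMK.inf_eq_bot, hMK.sup_eq_top, hNK.inf_eq_bot, hNK.sup_eq_top⟩

theorem stmt_16 {X : Type*} [NormedAddCommGroup X] [NormedSpace ℝ X] [CompleteSpace X]
    (M N : Submodule ℝ X) (hM : IsClosed (M : Set X)) (hN : IsClosed (N : Set X))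
    (hdense : Dense ((M ⊔ N : Submodule ℝ X) : Set X))
    (S : X →L[ℝ] X) (hS : S ∘L S = ContinuousLinearMap.id ℝ X)
    (hSMN : Submodule.map (S : X →ₗ[ℝ] X) M = N)
    (C : ℝ) (hC : 0 < C) (hbound : ∀ x ∈ M, C * ‖x‖ ≤ ‖x + S x‖) :
    IsClosed ((LinearMap.ker ((ContinuousLinearMap.id ℝ X + S : X →L[ℝ] X) : X →ₗ[ℝ] X) : Submodule ℝ X) : Set X) ∧
      M ⊓ LinearMap.ker ((ContinuousLinearMap.id ℝ X + S : X →L[ℝ] X) : X →ₗ[ℝ] X) = ⊥ ∧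
      M ⊔ LinearMap.ker ((ContinuousLinearMap.id ℝ X + S : X →L[ℝ] X) : X →ₗ[ℝ] X) = ⊤ ∧
      N ⊓ LinearMap.ker ((ContinuousLinearMap.id ℝ X + S : X →L[ℝ] X) : X →ₗ[ℝ] X) = ⊥ ∧
      N ⊔ LinearMap.ker ((ContinuousLinearMap.id ℝ X + S : X →L[ℝ] X) : X →ₗ[ℝ] X) = ⊤ :=
  stmt_16_general M N hM hdense S hS hSMN C hC hbound
end

section
/- Let X be a Banach space, M and N closed subspaces with closure(M+N) = X, and suppose M and N have a common complement in X. Then there exist a bounded linear operator S : X → X with S² = I and S(M) = N, and a constant C > 0 with ‖x + Sx‖ ≥ C‖x‖ for all x ∈ M. -/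
/-!
Let `P` and `Q` be the projections onto `M` and `N` along the common complement `K`; they are
bounded because `M`, `N`, `K` are closed. Sharing a kernel, they satisfy `P Q = P` and `Q P = Q`,
and this alone makes `S = P + Q - 1` an involution. On `M` the map `S` agrees with `Q`, which maps
`M` onto `N` with inverse `P`. Finally `P (x + S x) = P (x + Q x) = 2 x` for `x ∈ M`, so
`2 ‖x‖ ≤ ‖P‖ ‖x + S x‖`.
-/

theorem IsIdempotentElem.of_mul_eq_of_mul_eq {R : Type*} [Semigroup R] {a b : R}
    (hab : a * b = a) (hba : b * a = b) : IsIdempotentElem a := by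
  rw [IsIdempotentElem]; nth_rw 1 [← hab]; rw [mul_assoc, hba, hab]

theorem add_sub_one_mul_self_of_mul_eq {R : Type*} [Ring R] {a b : R}
    (hab : a * b = a) (hba : b * a = b) : (a + b - 1) * (a + b - 1) = 1 := by
  have ha : a * a = a := IsIdempotentElem.of_mul_eq_of_mul_eq hab hba
  have hb : b * b = b := IsIdempotentElem.of_mul_eq_of_mul_eq hba hab
  simp only [add_mul, mul_add, sub_mul, mul_sub, one_mul, mul_one, ha, hb, hab, hba]
  abel

namespace Submodule

section CommonComplement

variable {R M : Type*} [Ring R] [TopologicalSpace M] [AddCommGroup M] [Module R M]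
  {p q r : Submodule R M}

theorem projectionL_mul_projectionL_of_isTopCompl (hp : IsTopCompl p r) (hq : IsTopCompl q r) :
    p.projectionL r hp * q.projectionL r hq = p.projectionL r hp := by
  rw [← ContinuousLinearMap.coe_inj, ContinuousLinearMap.toLinearMap_mul]
  refine (LinearMap.IsIdempotentElem.comp_eq_left_iff
    (ContinuousLinearMap.IsIdempotentElem.toLinearMap (isIdempotentElem_projectionL hq)) _).2 ?_
  simp

theorem projectionL_apply_projectionL_of_isTopCompl (hp : IsTopCompl p r) (hq : IsTopCompl q r)
    (x : M) : p.projectionL r hp (q.projectionL r hq x) = p.projectionL r hp x :=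
  congr($(projectionL_mul_projectionL_of_isTopCompl hp hq) x)

variable [IsTopologicalAddGroup M]

noncomputable def commonComplInvolution (hp : IsTopCompl p r) (hq : IsTopCompl q r) : M →L[R] M :=
  p.projectionL r hp + q.projectionL r hq - 1

variable (hp : IsTopCompl p r) (hq : IsTopCompl q r)

theorem commonComplInvolution_mul_self :
    commonComplInvolution hp hq * commonComplInvolution hp hq = 1 :=
  add_sub_one_mul_self_of_mul_eq (projectionL_mul_projectionL_of_isTopCompl hp hq)
    (projectionL_mul_projectionL_of_isTopCompl hq hp)

theorem commonComplInvolution_apply_of_mem_left {x : M} (hx : x ∈ p) :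
    commonComplInvolution hp hq x = q.projectionL r hq x := by
  simp [commonComplInvolution, (projectionL_eq_self_iff hp x).2 hx]

theorem map_commonComplInvolution :
    map (commonComplInvolution hp hq : M →ₗ[R] M) p = q := by
  apply le_antisymm
  · rintro _ ⟨x, hx, rfl⟩
    rw [ContinuousLinearMap.coe_coe, commonComplInvolution_apply_of_mem_left hp hq hx]
    exact projectionL_apply_mem hq x
  · intro y hy
    refine ⟨p.projectionL r hp y, projectionL_apply_mem hp y, ?_⟩
    rw [ContinuousLinearMap.coe_coe, commonComplInvolution_apply_of_mem_left hp hq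
      (projectionL_apply_mem hp y), projectionL_apply_projectionL_of_isTopCompl,
      (projectionL_eq_self_iff hq y).2 hy]

theorem projectionL_add_commonComplInvolution {x : M} (hx : x ∈ p) :
    p.projectionL r hp (x + commonComplInvolution hp hq x) = x + x := by
  rw [commonComplInvolution_apply_of_mem_left hp hq hx, map_add,
    projectionL_apply_projectionL_of_isTopCompl, (projectionL_eq_self_iff hp x).2 hx]

end CommonComplement

theorem exists_pos_mul_norm_le_norm_add_commonComplInvolution {𝕜 E : Type*} [RCLike 𝕜]
    [SeminormedAddCommGroup E] [NormedSpace 𝕜 E] {p q r : Submodule 𝕜 E}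
    (hp : IsTopCompl p r) (hq : IsTopCompl q r) :
    ∃ C : ℝ, 0 < C ∧ ∀ x ∈ p, C * ‖x‖ ≤ ‖x + commonComplInvolution hp hq x‖ := by
  set P := p.projectionL r hp
  refine ⟨2 / (‖P‖ + 1), by positivity, fun x hx => ?_⟩
  set y := x + commonComplInvolution hp hq x
  rw [div_mul_eq_mul_div, div_le_iff₀ (by positivity), mul_comm ‖y‖]
  calc 2 * ‖x‖ = ‖P y‖ := by
        rw [projectionL_add_commonComplInvolution hp hq hx, ← two_smul 𝕜 x, norm_smul,
          RCLike.norm_two]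
    _ ≤ ‖P‖ * ‖y‖ := P.le_opNorm y
    _ ≤ (‖P‖ + 1) * ‖y‖ := by gcongr; linarith

end Submodule

theorem stmt_17_general {X : Type*} [NormedAddCommGroup X] [NormedSpace ℝ X] [CompleteSpace X]
    (M N : Submodule ℝ X) (hM : IsClosed (M : Set X)) (hN : IsClosed (N : Set X))
    (h : ∃ K : Submodule ℝ X, IsClosed (K : Set X) ∧
        M ⊓ K = ⊥ ∧ M ⊔ K = ⊤ ∧ N ⊓ K = ⊥ ∧ N ⊔ K = ⊤) :
    ∃ (S : X →L[ℝ] X) (C : ℝ), S ∘L S = ContinuousLinearMap.id ℝ X ∧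
      Submodule.map (S : X →ₗ[ℝ] X) M = N ∧ 0 < C ∧ ∀ x ∈ M, C * ‖x‖ ≤ ‖x + S x‖ := by
  obtain ⟨K, hK, hMK_inf, hMK_sup, hNK_inf, hNK_sup⟩ := h
  have hMK : M.IsTopCompl K := Submodule.IsCompl.isTopCompl_of_isClosed
    ⟨disjoint_iff.2 hMK_inf, codisjoint_iff.2 hMK_sup⟩ hM hK
  have hNK : N.IsTopCompl K := Submodule.IsCompl.isTopCompl_of_isClosed
    ⟨disjoint_iff.2 hNK_inf, codisjoint_iff.2 hNK_sup⟩ hN hK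
  obtain ⟨C, hC, hbound⟩ :=
    Submodule.exists_pos_mul_norm_le_norm_add_commonComplInvolution hMK hNK
  exact ⟨_, C, Submodule.commonComplInvolution_mul_self hMK hNK,
    Submodule.map_commonComplInvolution hMK hNK, hC, hbound⟩

theorem stmt_17 {X : Type*} [NormedAddCommGroup X] [NormedSpace ℝ X] [CompleteSpace X]
    (M N : Submodule ℝ X) (hM : IsClosed (M : Set X)) (hN : IsClosed (N : Set X))
    (hdense : Dense ((M ⊔ N : Submodule ℝ X) : Set X))
    (h : ∃ K : Submodule ℝ X, IsClosed (K : Set X) ∧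
        M ⊓ K = ⊥ ∧ M ⊔ K = ⊤ ∧ N ⊓ K = ⊥ ∧ N ⊔ K = ⊤) :
    ∃ (S : X →L[ℝ] X) (C : ℝ), S ∘L S = ContinuousLinearMap.id ℝ X ∧
      Submodule.map (S : X →ₗ[ℝ] X) M = N ∧ 0 < C ∧ ∀ x ∈ M, C * ‖x‖ ≤ ‖x + S x‖ :=
  stmt_17_general M N hM hN h
end

section
/- Let X₁, X₂ be Hilbert spaces and T : X₁ → X₂ a bounded linear operator. Then Gr(−T) ∩ Gr(T)^⊥ = Gr(−T restricted to ker(I − T*T)) and Gr(−T)^⊥ ∩ Gr(T) = Gr(T restricted to ker(I − T*T)); in particular, dim(Gr(−T) ∩ Gr(T)^⊥) = dim(ker(I − T*T)) = dim(Gr(−T)^⊥ ∩ Gr(T)). -/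
/-!
Since `⟪(a, S a), (x, y)⟫ = ⟪a, x + S* y⟫`, the orthogonal complement of `Gr(S)` is
`{(x, y) | x + S* y = 0}`. On `Gr(-T)` this condition reads `x - T*T x = 0`, and on `Gr(T)`
the condition for `Gr(-T)^⊥` reads the same. So both intersections are graphs over
`ker(I - T*T)`, and the first projection identifies each of them with that kernel.
-/

open ContinuousLinearMap Submodule

universe v

section graph

variable {R : Type*} {M N : Type v} [Ring R] [AddCommGroup M] [Module R M] [AddCommGroup N]
  [Module R N]

theorem LinearMap.graph_inf_prod_top_eq_map (S : M →ₗ[R] N) (W : Submodule R M) :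
    S.graph ⊓ W.prod ⊤ = W.map (LinearMap.id.prod S) := by
  ext ⟨x, y⟩
  simp only [mem_inf, LinearMap.mem_graph_iff, mem_prod, mem_top, and_true, mem_map,
    LinearMap.prod_apply]
  constructor
  · rintro ⟨rfl, hx⟩
    exact ⟨x, hx, rfl⟩
  · rintro ⟨x, hx, h⟩
    obtain ⟨rfl, rfl⟩ := Prod.ext_iff.mp h
    exact ⟨rfl, hx⟩

theorem LinearMap.rank_graph_inf_prod_top (S : M →ₗ[R] N) (W : Submodule R M) :
    Module.rank R ↥(S.graph ⊓ W.prod ⊤) = Module.rank R W := by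
  rw [S.graph_inf_prod_top_eq_map]
  exact rank_map_eq (fun a b h ↦ congrArg Prod.fst h) W

theorem LinearEquiv.rank_comap_eq {M₁ : Type v} [AddCommGroup M₁] [Module R M₁]
    (e : M ≃ₗ[R] M₁) (P : Submodule R M₁) :
    Module.rank R ↥(P.comap (e : M →ₗ[R] M₁)) = Module.rank R P := by
  rw [comap_equiv_eq_map_symm, LinearEquiv.rank_map_eq]

end graph

section adjoint

variable {𝕜 E F : Type*} [RCLike 𝕜] [NormedAddCommGroup E] [InnerProductSpace 𝕜 E]
  [CompleteSpace E] [NormedAddCommGroup F] [InnerProductSpace 𝕜 F] [CompleteSpace F]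

local notation "Φ" => (WithLp.linearEquiv 2 𝕜 (E × F) : WithLp 2 (E × F) →ₗ[𝕜] E × F)

theorem mem_orthogonal_comap_graph_iff (S : E →L[𝕜] F) (x : WithLp 2 (E × F)) :
    x ∈ ((S : E →ₗ[𝕜] F).graph.comap Φ)ᗮ ↔ x.ofLp.1 + adjoint S x.ofLp.2 = 0 := by
  have inner_graph : ∀ a : E,
      inner 𝕜 (WithLp.toLp 2 (a, S a)) x = inner 𝕜 a (x.ofLp.1 + adjoint S x.ofLp.2) := by
    intro a
    rw [WithLp.prod_inner_apply, inner_add_right, adjoint_inner_right]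
  rw [mem_orthogonal]
  constructor
  · intro h
    have := h (WithLp.toLp 2 (_, S (x.ofLp.1 + adjoint S x.ofLp.2))) rfl
    rwa [inner_graph, inner_self_eq_zero] at this
  · intro h u hu
    have u_eq : u = WithLp.toLp 2 (u.ofLp.1, S u.ofLp.1) :=
      congrArg (WithLp.toLp 2) (Prod.ext rfl hu)
    rw [u_eq, inner_graph, h, inner_zero_right]

theorem comap_graph_inf_orthogonal_comap_graph (S R : E →L[𝕜] F) :
    (S : E →ₗ[𝕜] F).graph.comap Φ ⊓ ((R : E →ₗ[𝕜] F).graph.comap Φ)ᗮ =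
      ((S : E →ₗ[𝕜] F).graph ⊓
        (LinearMap.ker ((ContinuousLinearMap.id 𝕜 E + adjoint R ∘L S : E →L[𝕜] E) :
          E →ₗ[𝕜] E)).prod ⊤).comap Φ := by
  ext x
  rw [mem_inf, mem_orthogonal_comap_graph_iff, mem_comap, mem_comap, mem_inf, mem_prod,
    LinearMap.mem_graph_iff]
  simp only [LinearMap.mem_ker, ContinuousLinearMap.coe_coe, add_apply, comp_apply, id_apply,
    mem_top, and_true]
  constructor
  · rintro ⟨hx, h⟩
    exact ⟨hx, hx ▸ h⟩
  · rintro ⟨hx, h⟩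
    exact ⟨hx, hx ▸ h⟩

end adjoint

theorem stmt_18 {E : Type u} [NormedAddCommGroup E] [InnerProductSpace ℝ E] [CompleteSpace E]
    {F : Type u} [NormedAddCommGroup F] [InnerProductSpace ℝ F] [CompleteSpace F]
    (T : E →L[ℝ] F) :
    let Φ : WithLp 2 (E × F) →ₗ[ℝ] E × F := (WithLp.linearEquiv 2 ℝ (E × F) : WithLp 2 (E × F) →ₗ[ℝ] E × F)
    let GrT : Submodule ℝ (WithLp 2 (E × F)) := Submodule.comap Φ (LinearMap.graph (T : E →ₗ[ℝ] F))
    let GrmT : Submodule ℝ (WithLp 2 (E × F)) := Submodule.comap Φ (LinearMap.graph ((-T : E →L[ℝ] F) : E →ₗ[ℝ] F))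
    let V : Submodule ℝ E := LinearMap.ker ((ContinuousLinearMap.id ℝ E - ContinuousLinearMap.adjoint T ∘L T : E →L[ℝ] E) : E →ₗ[ℝ] E)
    GrmT ⊓ GrTᗮ =
        Submodule.comap Φ (LinearMap.graph ((-T : E →L[ℝ] F) : E →ₗ[ℝ] F) ⊓ V.prod ⊤) ∧
      GrmTᗮ ⊓ GrT = Submodule.comap Φ (LinearMap.graph (T : E →ₗ[ℝ] F) ⊓ V.prod ⊤) ∧
      Module.rank ℝ (GrmT ⊓ GrTᗮ : Submodule ℝ (WithLp 2 (E × F))) = Module.rank ℝ V ∧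
      Module.rank ℝ (GrmTᗮ ⊓ GrT : Submodule ℝ (WithLp 2 (E × F))) = Module.rank ℝ V := by
  intro Φ GrT GrmT V
  have adjoint_neg_comp :
      ContinuousLinearMap.id ℝ E + adjoint T ∘L (-T) = ContinuousLinearMap.id ℝ E - adjoint T ∘L T := by
    rw [comp_neg, sub_eq_add_neg]
  have adjoint_comp_neg :
      ContinuousLinearMap.id ℝ E + adjoint (-T) ∘L T = ContinuousLinearMap.id ℝ E - adjoint T ∘L T := by
    rw [map_neg, neg_comp, sub_eq_add_neg]
  have h₁ : GrmT ⊓ GrTᗮ = (((-T : E →L[ℝ] F) : E →ₗ[ℝ] F).graph ⊓ V.prod ⊤).comap Φ := by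
    rw [comap_graph_inf_orthogonal_comap_graph, adjoint_neg_comp]
  have h₂ : GrmTᗮ ⊓ GrT = ((T : E →ₗ[ℝ] F).graph ⊓ V.prod ⊤).comap Φ := by
    rw [inf_comm, comap_graph_inf_orthogonal_comap_graph, adjoint_comp_neg]
  refine ⟨h₁, h₂, ?_, ?_⟩
  · rw [h₁, LinearEquiv.rank_comap_eq, LinearMap.rank_graph_inf_prod_top]
  · rw [h₂, LinearEquiv.rank_comap_eq, LinearMap.rank_graph_inf_prod_top]
end

section
/- Let X₁, X₂ be Hilbert spaces and T : X₁ → X₂ a bounded linear operator. Then Gr(T) + Gr(T*)† = X₁ ⊕ X₂ if and only if I − TT* : X₂ → X₂ is surjective, where Gr(T*)† := {(T*y, y) : y ∈ X₂} = Gr(−T)^⊥. More precisely, Gr(T) + Gr(T*)† = Gr(T) ⊕ ({0} × range(I − TT*)). -/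
/-!
Since `(T* y, y) = (T* y, T T* y) + (0, (I - T T*) y)` and the first summand lies in `Gr(T)`,
adding `Gr(T*)†` to `Gr(T)` is the same as adding `{0} × range (I - T T*)`. The sum with
`{0} × R` is direct, and as `(x, z) = (x, T x) + (0, z - T x)` it is everything exactly when
`R` is.
-/

namespace Submodule

variable {R M P : Type*} [Ring R] [AddCommGroup M] [Module R M] [AddCommGroup P] [Module R P]

theorem sup_range_eq_of_sub_mem (G : Submodule R M)
    {v w : P →ₗ[R] M} (h : ∀ y, v y - w y ∈ G) : G ⊔ LinearMap.range v = G ⊔ LinearMap.range w := by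
  have key : ∀ {v w : P →ₗ[R] M}, (∀ y, v y - w y ∈ G) →
      LinearMap.range v ≤ G ⊔ LinearMap.range w := by
    rintro v w h _ ⟨y, rfl⟩
    simpa using add_mem_sup (h y) (LinearMap.mem_range_self w y)
  exact le_antisymm (sup_le le_sup_left (key h))
    (sup_le le_sup_left (key fun y => by simpa using G.neg_mem (h y)))

end Submodule

namespace LinearMap

variable {R M N : Type*} [Ring R] [AddCommGroup M] [Module R M] [AddCommGroup N] [Module R N]

theorem graph_inf_prod_bot (f : M →ₗ[R] N) (p : Submodule R N) :
    graph f ⊓ (⊥ : Submodule R M).prod p = ⊥ := by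
  rw [eq_bot_iff]
  rintro ⟨a, b⟩ hx
  obtain ⟨hgraph, hprod⟩ := Submodule.mem_inf.1 hx
  obtain ⟨ha : a = 0, -⟩ := Submodule.mem_prod.1 hprod
  obtain rfl : b = f a := (mem_graph_iff _ _).1 hgraph
  simp [ha]

theorem graph_sup_prod_bot_eq_top_iff (f : M →ₗ[R] N) (p : Submodule R N) :
    graph f ⊔ (⊥ : Submodule R M).prod p = ⊤ ↔ p = ⊤ := by
  refine ⟨fun h => eq_top_iff.2 fun z _ => ?_, fun h => eq_top_iff.2 fun ⟨a, b⟩ _ => ?_⟩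
  · obtain ⟨⟨a, b⟩, hgraph, ⟨c, w⟩, hprod, hsum⟩ :=
      Submodule.mem_sup.1 (h ▸ Submodule.mem_top : ((0 : M), z) ∈ graph f ⊔ _)
    obtain ⟨hc : c = 0, hw : w ∈ p⟩ := Submodule.mem_prod.1 hprod
    obtain rfl : b = f a := (mem_graph_iff _ _).1 hgraph
    obtain ⟨rfl, rfl⟩ : a = 0 ∧ f a + w = z := by simpa [hc] using hsum
    simpa using hw
  · exact Submodule.mem_sup.2 ⟨(a, f a), (mem_graph_iff _ _).2 rfl, (0, b - f a),
      ⟨Submodule.zero_mem _, h ▸ Submodule.mem_top⟩, by simp⟩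

theorem graph_sup_range_prod_id (f : M →ₗ[R] N) (g : N →ₗ[R] M) :
    graph f ⊔ range (g.prod id) = graph f ⊔ (⊥ : Submodule R M).prod (range (id - f ∘ₗ g)) := by
  rw [← Submodule.map_inr, ← range_comp]
  exact (graph f).sup_range_eq_of_sub_mem fun y => (mem_graph_iff _ _).2 (by simp)

end LinearMap

theorem stmt_19 {E : Type*} [NormedAddCommGroup E] [InnerProductSpace ℝ E] [CompleteSpace E]
    {F : Type*} [NormedAddCommGroup F] [InnerProductSpace ℝ F] [CompleteSpace F]
    (T : E →L[ℝ] F) :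
    let D : Submodule ℝ (E × F) :=
      LinearMap.range (((ContinuousLinearMap.adjoint T : F →ₗ[ℝ] E)).prod (LinearMap.id))
    let R : Submodule ℝ F :=
      LinearMap.range ((ContinuousLinearMap.id ℝ F - T ∘L ContinuousLinearMap.adjoint T : F →L[ℝ] F) : F →ₗ[ℝ] F)
    LinearMap.graph (T : E →ₗ[ℝ] F) ⊔ D =
        LinearMap.graph (T : E →ₗ[ℝ] F) ⊔ Submodule.prod ⊥ R ∧
      LinearMap.graph (T : E →ₗ[ℝ] F) ⊓ Submodule.prod ⊥ R = ⊥ ∧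
      (LinearMap.graph (T : E →ₗ[ℝ] F) ⊔ D = ⊤ ↔
        Function.Surjective (ContinuousLinearMap.id ℝ F - T ∘L ContinuousLinearMap.adjoint T)) := by
  intro D R
  have hsup : LinearMap.graph (T : E →ₗ[ℝ] F) ⊔ D =
      LinearMap.graph (T : E →ₗ[ℝ] F) ⊔ Submodule.prod ⊥ R :=
    LinearMap.graph_sup_range_prod_id _ _
  refine ⟨hsup, LinearMap.graph_inf_prod_bot _ R, ?_⟩
  rw [hsup, LinearMap.graph_sup_prod_bot_eq_top_iff, LinearMap.range_eq_top]
  rfl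
end
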